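/- arXiv:2309.08184 — 8 statements merged into one kernel-verified Lean document; each statement's English description precedes it below -/
import Mathlib

section
/- Let K_G = ((ω−1)/ω)·J − A_G where J is the all-ones matrix and ω the clique number of G. Then xᵀ K_G x ≥ 0 for every vector x with nonnegative entries. -/
open Matrix Finset SimpleGraph

variable {V : Type*} [Fintype V] [DecidableEq V]

set_option linter.unusedSectionVars false

lemma adjH (G : SimpleGraph V) [DecidableRel G.Adj] : (G.adjMatrix ℝ).IsHermitian := by
  unfold Matrix.IsHermitian
  rw [conjTranspose_eq_transpose_of_trivial]
  exact G.transpose_adjMatrix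

/-- `graphEig G k` : the (k+1)-st largest eigenvalue (with multiplicity) of the adjacency
matrix of `G`. -/
noncomputable def graphEig (G : SimpleGraph V) [DecidableRel G.Adj] (k : ℕ) : ℝ :=
  ((Finset.univ.val.map (adjH G).eigenvalues).sort (· ≥ ·)).getD k 0

/-! Motzkin–Straus, in the division-free form `ω · xᵀAx ≤ (ω - 1) (∑ x)²` for `x ≥ 0`; since
`xᵀJx = (∑ x)²` this is the theorem. If two non-adjacent vertices `i, j` both carry weight, with
`δ = eᵢ - eⱼ` we have `δᵀAδ = 0`, so moving the weight of `j` onto `i` changes `xᵀAx` by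
`2 xⱼ ((Ax)ᵢ - (Ax)ⱼ)`; choosing `j` with the smaller value of `Ax` the form does not decrease,
the total weight is kept and the support shrinks. Once the support is a clique,
`xᵀAx = (∑ x)² - ∑ x²`, and Cauchy–Schwarz on a support of at most `ω` vertices gives the bound. -/

theorem Matrix.IsSymm.dotProduct_mulVec_add_smul {n R : Type*} [Fintype n] [CommSemiring R]
    {A : Matrix n n R} (hA : A.IsSymm) (x d : n → R) (t : R) :
    (x + t • d) ⬝ᵥ A *ᵥ (x + t • d) =
      x ⬝ᵥ A *ᵥ x + 2 * t * (d ⬝ᵥ A *ᵥ x) + t ^ 2 * (d ⬝ᵥ A *ᵥ d) := by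
  have hcomm : x ⬝ᵥ A *ᵥ d = d ⬝ᵥ A *ᵥ x := by
    rw [← dotProduct_transpose_mulVec, hA.eq]
  simp only [mulVec_add, mulVec_smul, add_dotProduct, dotProduct_add, smul_dotProduct,
    dotProduct_smul, hcomm, smul_eq_mul]
  ring

namespace SimpleGraph

variable {R : Type*} (G : SimpleGraph V) [DecidableRel G.Adj]

lemma single_sub_single_dotProduct_adjMatrix_mulVec_self [Ring R] {i j : V}
    (hadj : ¬ G.Adj i j) :
    (Pi.single i 1 - Pi.single j 1) ⬝ᵥ G.adjMatrix R *ᵥ (Pi.single i 1 - Pi.single j 1) = 0 := by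
  have hadj' : ¬ G.Adj j i := fun h => hadj h.symm
  simp [mulVec_sub, sub_dotProduct, single_dotProduct, hadj, hadj']

lemma dotProduct_adjMatrix_mulVec_le_of_shift [CommRing R] [LinearOrder R] [IsStrictOrderedRing R]
    (x : V → R) {i j : V} (hadj : ¬ G.Adj i j) (hxj : 0 ≤ x j)
    (hle : (G.adjMatrix R *ᵥ x) j ≤ (G.adjMatrix R *ᵥ x) i) :
    x ⬝ᵥ G.adjMatrix R *ᵥ x ≤
      (x + x j • (Pi.single i 1 - Pi.single j 1)) ⬝ᵥ
        G.adjMatrix R *ᵥ (x + x j • (Pi.single i 1 - Pi.single j 1)) := by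
  rw [G.isSymm_adjMatrix.dotProduct_mulVec_add_smul,
    G.single_sub_single_dotProduct_adjMatrix_mulVec_self hadj]
  simp only [sub_dotProduct, single_dotProduct, one_mul]
  nlinarith [mul_nonneg hxj (sub_nonneg.mpr hle)]

lemma exists_shift_le [CommRing R] [LinearOrder R] [IsStrictOrderedRing R]
    (x : V → R) (hx : 0 ≤ x) {i j : V} (hi : x i ≠ 0) (hj : x j ≠ 0) (hij : i ≠ j)
    (hadj : ¬ G.Adj i j) :
    ∃ y : V → R, 0 ≤ y ∧ #{v | y v ≠ 0} < #{v | x v ≠ 0} ∧ ∑ v, y v = ∑ v, x v ∧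
      x ⬝ᵥ G.adjMatrix R *ᵥ x ≤ y ⬝ᵥ G.adjMatrix R *ᵥ y := by
  wlog hle : (G.adjMatrix R *ᵥ x) j ≤ (G.adjMatrix R *ᵥ x) i generalizing i j
  · exact this hj hi hij.symm (fun h => hadj h.symm) (le_of_not_ge hle)
  set y := x + x j • (Pi.single i 1 - Pi.single j 1 : V → R) with hy
  have hy_apply (v : V) : y v = if v = j then 0 else if v = i then x i + x j else x v := by
    rcases eq_or_ne v j with rfl | hvj
    · simp [hy, hij.symm]
    · rcases eq_or_ne v i with rfl | hvi
      · simp [hy, hvj]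
      · simp [hy, hvi, hvj]
  refine ⟨y, fun v => ?_, Finset.card_lt_card ?_, ?_,
    G.dotProduct_adjMatrix_mulVec_le_of_shift x hadj (hx j) hle⟩
  · rw [hy_apply]
    split_ifs
    exacts [le_rfl, add_nonneg (hx i) (hx j), hx v]
  · refine (Finset.ssubset_iff_of_subset fun v hv => ?_).2 ⟨j, by simp [hj], by simp [hy_apply]⟩
    simp only [Finset.mem_filter, Finset.mem_univ, true_and, hy_apply] at hv ⊢
    split_ifs at hv with hvj hvi
    exacts [absurd rfl hv, hvi ▸ hi, hv]
  · simp [hy, Finset.sum_add_distrib, ← Finset.mul_sum, Finset.sum_sub_distrib]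

lemma adjMatrix_mulVec_apply_of_isClique [Ring R] {x : V → R}
    (hx : G.IsClique (Function.support x)) {i : V} (hi : x i ≠ 0) :
    (G.adjMatrix R *ᵥ x) i = ∑ j, x j - x i := by
  rw [adjMatrix_mulVec_apply, ← Finset.sum_erase_eq_sub (Finset.mem_univ i)]
  refine Finset.sum_subset (fun j hj => ?_) fun j hj hjn => ?_
  · simpa [eq_comm] using (G.mem_neighborFinset i j).1 hj |>.ne
  · by_contra hxj
    exact hjn ((G.mem_neighborFinset i j).2 (hx hi hxj (Finset.ne_of_mem_erase hj).symm))

lemma dotProduct_adjMatrix_mulVec_of_isClique [CommRing R] {x : V → R}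
    (hx : G.IsClique (Function.support x)) :
    x ⬝ᵥ G.adjMatrix R *ᵥ x = (∑ i, x i) ^ 2 - ∑ i, x i ^ 2 := by
  calc x ⬝ᵥ G.adjMatrix R *ᵥ x = ∑ i, x i * (∑ j, x j - x i) := by
        refine Finset.sum_congr rfl fun i _ => ?_
        rcases eq_or_ne (x i) 0 with hi | hi
        · simp [hi]
        · rw [G.adjMatrix_mulVec_apply_of_isClique hx hi]
    _ = (∑ i, x i) ^ 2 - ∑ i, x i ^ 2 := by
        simp only [mul_sub, Finset.sum_sub_distrib, ← Finset.sum_mul, sq]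

lemma cliqueNum_mul_dotProduct_adjMatrix_mulVec_le_of_isClique [CommRing R] [LinearOrder R]
    [IsStrictOrderedRing R] {x : V → R} (hx : G.IsClique (Function.support x)) :
    G.cliqueNum * (x ⬝ᵥ G.adjMatrix R *ᵥ x) ≤ (G.cliqueNum - 1) * (∑ i, x i) ^ 2 := by
  set s : Finset V := {i | x i ≠ 0}
  have hs : G.IsClique (s : Set V) := by simpa [s, Function.support] using hx
  have hcard : (#s : R) ≤ G.cliqueNum := by exact_mod_cast hs.card_le_cliqueNum
  have hsq : (∑ i, x i) ^ 2 ≤ G.cliqueNum * ∑ i, x i ^ 2 := by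
    have hsq_supp : ∑ i ∈ s, x i ^ 2 = ∑ i, x i ^ 2 :=
      Finset.sum_filter_of_ne fun i _ h => by simpa using h
    rw [← Finset.sum_filter_ne_zero, ← hsq_supp]
    exact sq_sum_le_card_mul_sum_sq.trans
      (mul_le_mul_of_nonneg_right hcard (Finset.sum_nonneg fun i _ => sq_nonneg (x i)))
  rw [G.dotProduct_adjMatrix_mulVec_of_isClique hx]
  linear_combination hsq

theorem cliqueNum_mul_dotProduct_adjMatrix_mulVec_le [CommRing R] [LinearOrder R]
    [IsStrictOrderedRing R] (x : V → R) (hx : 0 ≤ x) :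
    G.cliqueNum * (x ⬝ᵥ G.adjMatrix R *ᵥ x) ≤ (G.cliqueNum - 1) * (∑ i, x i) ^ 2 := by
  induction hn : #{i | x i ≠ 0} using Nat.strong_induction_on generalizing x with
  | _ n ih =>
  by_cases hcl : G.IsClique (Function.support x)
  · exact G.cliqueNum_mul_dotProduct_adjMatrix_mulVec_le_of_isClique hcl
  simp only [isClique_iff, Set.Pairwise, not_forall] at hcl
  obtain ⟨i, hi, j, hj, hij, hadj⟩ := hcl
  obtain ⟨y, hy, hcard, hsum, hle⟩ := G.exists_shift_le x hx hi hj hij hadj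
  calc G.cliqueNum * (x ⬝ᵥ G.adjMatrix R *ᵥ x)
      ≤ G.cliqueNum * (y ⬝ᵥ G.adjMatrix R *ᵥ y) := by gcongr
    _ ≤ (G.cliqueNum - 1) * (∑ i, y i) ^ 2 := ih _ (hn ▸ hcard) y hy rfl
    _ = (G.cliqueNum - 1) * (∑ i, x i) ^ 2 := by rw [hsum]

end SimpleGraph

theorem K_matrix_nonneg_on_nonneg (G : SimpleGraph V) [DecidableRel G.Adj]
    (hω : 1 ≤ G.cliqueNum)
    (K : Matrix V V ℝ)
    (hK : K = (((G.cliqueNum : ℝ) - 1) / (G.cliqueNum : ℝ)) • (Matrix.of fun _ _ => (1 : ℝ))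
        - G.adjMatrix ℝ)
    (x : V → ℝ) (hx : ∀ i, 0 ≤ x i) :
    0 ≤ x ⬝ᵥ (K *ᵥ x) := by
  have hJ : x ⬝ᵥ (Matrix.of fun _ _ => (1 : ℝ)) *ᵥ x = (∑ i, x i) ^ 2 := by
    simp [dotProduct, mulVec, ← Finset.sum_mul, sq]
  have hω_pos : (0 : ℝ) < G.cliqueNum := by exact_mod_cast hω
  rw [hK, sub_mulVec, dotProduct_sub, smul_mulVec, dotProduct_smul, smul_eq_mul, hJ, sub_nonneg,
    div_mul_eq_mul_div, le_div_iff₀ hω_pos, mul_comm]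
  exact G.cliqueNum_mul_dotProduct_adjMatrix_mulVec_le x hx
end

section
/- (Spectral Turán theorem of Nikiforov) For any graph G with m edges and clique number ω, the largest adjacency eigenvalue satisfies μ₁(G)² ≤ (2(ω−1)/ω)·m. -/
open Matrix Finset SimpleGraph

variable {V : Type*} [Fintype V] [DecidableEq V]

set_option linter.unusedSectionVars false

def Q (G : SimpleGraph V) [DecidableRel G.Adj] (y : V → ℝ) : ℝ :=
  ∑ i, ∑ j, G.adjMatrix ℝ i j * (y i * y j)


lemma sum_adj_row (G : SimpleGraph V) [DecidableRel G.Adj] (i : V) :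
    ∑ j, G.adjMatrix ℝ i j = (G.degree i : ℝ) := by
  simp [SimpleGraph.adjMatrix_apply, SimpleGraph.degree, SimpleGraph.neighborFinset_eq_filter,
    Finset.sum_boole]


lemma sum_sum_adj (G : SimpleGraph V) [DecidableRel G.Adj] :
    ∑ i, ∑ j, G.adjMatrix ℝ i j = 2 * (G.edgeFinset.card : ℝ) := by
  simp_rw [sum_adj_row]
  rw [← Nat.cast_sum]
  rw [SimpleGraph.sum_degrees_eq_twice_card_edges]
  push_cast; ring

lemma Q_shift (G : SimpleGraph V) [DecidableRel G.Adj] {i j : V} (hne : i ≠ j)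
    (hadj : ¬ G.Adj i j) (c : ℝ) (y : V → ℝ) :
    Q G (fun k => y k + c * ((if k = i then (1:ℝ) else 0) - (if k = j then 1 else 0))) =
      Q G y + 2 * c * ((∑ t, G.adjMatrix ℝ i t * y t) - (∑ t, G.adjMatrix ℝ j t * y t)) := by
  classical
  set u : V → ℝ := fun k => (if k = i then (1:ℝ) else 0) - (if k = j then 1 else 0) with hu
  have hsym : ∀ s t : V, G.adjMatrix ℝ s t = G.adjMatrix ℝ t s := by
    intro s t; simp [SimpleGraph.adjMatrix_apply, G.adj_comm]
  have husum : ∀ s, ∑ t, G.adjMatrix ℝ s t * u t = G.adjMatrix ℝ s i - G.adjMatrix ℝ s j := by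
    intro s
    simp only [hu, mul_sub, mul_ite, mul_one, mul_zero, Finset.sum_sub_distrib,
      Finset.sum_ite_eq', Finset.mem_univ, if_true]
  have key : Q G (fun k => y k + c * u k) = Q G y
      + c * (∑ s, y s * (G.adjMatrix ℝ s i - G.adjMatrix ℝ s j))
      + c * (∑ s, u s * (∑ t, G.adjMatrix ℝ s t * y t))
      + c^2 * (∑ s, u s * (G.adjMatrix ℝ s i - G.adjMatrix ℝ s j)) := by
    unfold Q
    have hrow : ∀ s : V, ∑ t, G.adjMatrix ℝ s t * ((y s + c * u s) * (y t + c * u t)) =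
        (∑ t, G.adjMatrix ℝ s t * (y s * y t)) + c * (y s * (G.adjMatrix ℝ s i - G.adjMatrix ℝ s j))
        + c * (u s * (∑ t, G.adjMatrix ℝ s t * y t))
        + c^2 * (u s * (G.adjMatrix ℝ s i - G.adjMatrix ℝ s j)) := by
      intro s
      have e1 : ∑ t, G.adjMatrix ℝ s t * (y s * u t) = y s * (G.adjMatrix ℝ s i - G.adjMatrix ℝ s j) := by
        rw [← husum s]; rw [Finset.mul_sum]; apply Finset.sum_congr rfl; intro t _; ring
      have e2 : ∑ t, G.adjMatrix ℝ s t * (u s * u t) = u s * (G.adjMatrix ℝ s i - G.adjMatrix ℝ s j) := by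
        rw [← husum s]; rw [Finset.mul_sum]; apply Finset.sum_congr rfl; intro t _; ring
      calc ∑ t, G.adjMatrix ℝ s t * ((y s + c * u s) * (y t + c * u t))
          = ∑ t, (G.adjMatrix ℝ s t * (y s * y t) + c * (G.adjMatrix ℝ s t * (y s * u t))
            + c * (u s * (G.adjMatrix ℝ s t * y t)) + c^2 * (G.adjMatrix ℝ s t * (u s * u t))) := by
            apply Finset.sum_congr rfl; intro t _; ring
        _ = _ := by
            rw [Finset.sum_add_distrib, Finset.sum_add_distrib, Finset.sum_add_distrib,
              ← Finset.mul_sum, ← Finset.mul_sum, ← Finset.mul_sum, ← Finset.mul_sum, e1, e2]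
    rw [Finset.sum_congr rfl (fun s _ => hrow s)]
    rw [Finset.sum_add_distrib, Finset.sum_add_distrib, Finset.sum_add_distrib,
      ← Finset.mul_sum, ← Finset.mul_sum, ← Finset.mul_sum]
  have T1 : ∑ s, y s * (G.adjMatrix ℝ s i - G.adjMatrix ℝ s j) =
      (∑ t, G.adjMatrix ℝ i t * y t) - (∑ t, G.adjMatrix ℝ j t * y t) := by
    rw [← Finset.sum_sub_distrib]; apply Finset.sum_congr rfl; intro s _
    rw [hsym s i, hsym s j]; ring
  have T2 : ∑ s, u s * (∑ t, G.adjMatrix ℝ s t * y t) =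
      (∑ t, G.adjMatrix ℝ i t * y t) - (∑ t, G.adjMatrix ℝ j t * y t) := by
    simp only [hu, sub_mul, ite_mul, one_mul, zero_mul, Finset.sum_sub_distrib,
      Finset.sum_ite_eq', Finset.mem_univ, if_true]
  have T3 : ∑ s, u s * (G.adjMatrix ℝ s i - G.adjMatrix ℝ s j) = 0 := by
    simp only [hu, sub_mul, ite_mul, one_mul, zero_mul, Finset.sum_sub_distrib,
      Finset.sum_ite_eq', Finset.mem_univ, if_true]
    have hAii : G.adjMatrix ℝ i i = 0 := by simp
    have hAjj : G.adjMatrix ℝ j j = 0 := by simp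
    have hAij : G.adjMatrix ℝ i j = 0 := by simp [hadj]
    have hAji : G.adjMatrix ℝ j i = 0 := (hsym j i).trans hAij
    rw [hAii, hAjj, hAij, hAji]; ring
  rw [key, T1, T2, T3]; ring

lemma Q_clique (G : SimpleGraph V) [DecidableRel G.Adj] (y : V → ℝ) (hy : ∀ i, 0 ≤ y i)
    (hK : G.IsClique ((Finset.univ.filter (fun i => y i ≠ 0)) : Finset V)) :
    Q G y ≤ (1 - 1/(G.cliqueNum : ℝ)) * (∑ i, y i)^2 := by
  classical
  set K : Finset V := Finset.univ.filter (fun i => y i ≠ 0) with hKdef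
  have hyK : ∀ i ∉ K, y i = 0 := by
    intro i hi; by_contra h; exact hi (by simp [hKdef, h])
  have hsum : ∑ i ∈ K, y i = ∑ i, y i :=
    Finset.sum_subset (K.subset_univ) (fun i _ hi => hyK i hi)
  have hQ : Q G y = (∑ i ∈ K, y i)^2 - ∑ i ∈ K, (y i)^2 := by
    unfold Q
    have houter : ∑ i, ∑ j, G.adjMatrix ℝ i j * (y i * y j)
        = ∑ i ∈ K, ∑ j ∈ K, G.adjMatrix ℝ i j * (y i * y j) := by
      rw [← Finset.sum_subset (K.subset_univ) (fun i _ hi => by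
        simp [hyK i hi])]
      apply Finset.sum_congr rfl; intro i _
      rw [← Finset.sum_subset (K.subset_univ) (fun j _ hj => by simp [hyK j hj])]
    rw [houter]
    have hrow : ∀ i ∈ K, ∑ j ∈ K, G.adjMatrix ℝ i j * (y i * y j)
        = (∑ j ∈ K, y i * y j) - y i * y i := by
      intro i hi
      have : ∀ j ∈ K, G.adjMatrix ℝ i j * (y i * y j)
          = y i * y j - (if j = i then y i * y j else 0) := by
        intro j hj
        by_cases h : j = i
        · subst h; simp
        · have hadj : G.Adj i j := hK (by simpa [hKdef] using hi) (by simpa [hKdef] using hj)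
            (fun he => h he.symm)
          simp [hadj, h]
      rw [Finset.sum_congr rfl this, Finset.sum_sub_distrib, Finset.sum_ite_eq' K i _, if_pos hi]
    rw [Finset.sum_congr rfl hrow, Finset.sum_sub_distrib]
    have : ∑ i ∈ K, ∑ j ∈ K, y i * y j = (∑ i ∈ K, y i)^2 := by
      rw [sq, Finset.sum_mul]; apply Finset.sum_congr rfl; intro i _; rw [Finset.mul_sum]
    rw [this]; congr 1; apply Finset.sum_congr rfl; intro i _; ring
  rw [hQ, hsum]
  set s := ∑ i, y i
  set T := ∑ i ∈ K, (y i)^2 with hT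
  have hTnn : 0 ≤ T := Finset.sum_nonneg (fun i _ => sq_nonneg _)
  have hCS : s^2 ≤ (K.card : ℝ) * T := by
    rw [← hsum]
    calc (∑ i ∈ K, y i)^2 ≤ (K.card : ℝ) * ∑ i ∈ K, (y i)^2 := by
          exact_mod_cast sq_sum_le_card_mul_sum_sq (s := K) (f := y)
      _ = (K.card : ℝ) * T := rfl
  have hkω : K.card ≤ G.cliqueNum := SimpleGraph.IsClique.card_le_cliqueNum (tc := hK)
  by_cases hk0 : K = ∅
  · have : s = 0 := by rw [← hsum, hk0]; simp
    simp [this, hk0, hT, hk0]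
  · have hk1 : 1 ≤ K.card := Finset.card_pos.mpr (Finset.nonempty_iff_ne_empty.mpr hk0)
    have hω1 : 1 ≤ G.cliqueNum := le_trans hk1 hkω
    have hωpos : (0:ℝ) < (G.cliqueNum : ℝ) := by exact_mod_cast lt_of_lt_of_le Nat.zero_lt_one hω1
    have hsω : s^2 ≤ (G.cliqueNum : ℝ) * T := by
      calc s^2 ≤ (K.card : ℝ) * T := hCS
        _ ≤ (G.cliqueNum : ℝ) * T := by
            apply mul_le_mul_of_nonneg_right _ hTnn
            exact_mod_cast hkω
    have : s^2 / (G.cliqueNum : ℝ) ≤ T := by rw [div_le_iff₀ hωpos]; linarith [hsω]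
    have expand : (1 - 1/(G.cliqueNum : ℝ)) * s^2 = s^2 - s^2/(G.cliqueNum : ℝ) := by ring
    rw [expand]; linarith

lemma MS_aux (G : SimpleGraph V) [DecidableRel G.Adj] :
    ∀ n : ℕ, ∀ y : V → ℝ, (∀ i, 0 ≤ y i) →
      (Finset.univ.filter (fun i => y i ≠ 0)).card ≤ n →
      Q G y ≤ (1 - 1/(G.cliqueNum : ℝ)) * (∑ i, y i)^2 := by
  intro n
  induction n with
  | zero =>
    intro y hy hcard
    have h0 : ∀ i, y i = 0 := by
      intro i; by_contra h
      have : i ∈ Finset.univ.filter (fun i => y i ≠ 0) := by simp [h]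
      have := Finset.card_pos.mpr ⟨i, this⟩
      omega
    have hQ : Q G y = 0 := by
      unfold Q
      apply Finset.sum_eq_zero; intro i _; apply Finset.sum_eq_zero; intro j _
      rw [h0 i]; ring
    have hs : ∑ i, y i = 0 := Finset.sum_eq_zero (fun i _ => h0 i)
    rw [hQ, hs]; simp
  | succ n ih =>
    intro y hy hcard
    by_cases hK : G.IsClique ((Finset.univ.filter (fun i => y i ≠ 0)) : Finset V)
    · exact Q_clique G y hy hK
    · rw [SimpleGraph.isClique_iff] at hK
      unfold Set.Pairwise at hK
      push_neg at hK
      obtain ⟨i, hi, j, hj, hne, hadj⟩ := hK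
      have hi' : i ∈ Finset.univ.filter (fun k => y k ≠ 0) := by exact_mod_cast hi
      have hj' : j ∈ Finset.univ.filter (fun k => y k ≠ 0) := by exact_mod_cast hj
      -- main step, for i with larger row sum
      have step : ∀ a b : V, a ∈ Finset.univ.filter (fun k => y k ≠ 0) →
          b ∈ Finset.univ.filter (fun k => y k ≠ 0) → a ≠ b → ¬ G.Adj a b →
          (∑ t, G.adjMatrix ℝ b t * y t) ≤ (∑ t, G.adjMatrix ℝ a t * y t) →
          Q G y ≤ (1 - 1/(G.cliqueNum : ℝ)) * (∑ i, y i)^2 := by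
        intro a b ha hb hab hnadj hL
        set y' : V → ℝ :=
          fun k => y k + y b * ((if k = a then (1:ℝ) else 0) - (if k = b then 1 else 0)) with hy'
        have hbne : b ≠ a := hab.symm
        have hy'b : y' b = 0 := by simp [hy', hbne]
        have hy'a : y' a = y a + y b := by simp [hy', hab]
        have hy'other : ∀ k, k ≠ a → k ≠ b → y' k = y k := by
          intro k h1 h2; simp [hy', h1, h2]
        have hy'nn : ∀ k, 0 ≤ y' k := by
          intro k
          by_cases h1 : k = a
          · subst h1; rw [hy'a]; have := hy k; have := hy b; linarith
          · by_cases h2 : k = b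
            · subst h2; rw [hy'b]
            · rw [hy'other k h1 h2]; exact hy k
        have hsum' : ∑ k, y' k = ∑ k, y k := by
          simp only [hy']
          rw [Finset.sum_add_distrib, ← Finset.mul_sum]
          simp [Finset.sum_sub_distrib, Finset.sum_ite_eq', Finset.mem_univ]
        have hsupp : Finset.univ.filter (fun k => y' k ≠ 0) ⊆
            (Finset.univ.filter (fun k => y k ≠ 0)).erase b := by
          intro k hk
          rw [Finset.mem_filter] at hk
          rcases hk with ⟨-, hk⟩
          by_cases h2 : k = b
          · exact absurd (h2 ▸ hy'b) hk
          · apply Finset.mem_erase.mpr ⟨h2, ?_⟩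
            rw [Finset.mem_filter]
            refine ⟨Finset.mem_univ _, ?_⟩
            by_cases h1 : k = a
            · subst h1; exact (Finset.mem_filter.mp ha).2
            · rw [← hy'other k h1 h2]; exact hk
        have hcard' : (Finset.univ.filter (fun k => y' k ≠ 0)).card ≤ n := by
          have h1 := Finset.card_le_card hsupp
          have h2 := Finset.card_erase_of_mem (Finset.mem_filter.mp hb |> fun h =>
            Finset.mem_filter.mpr h)
          rw [h2] at h1
          omega
        have hQle : Q G y ≤ Q G y' := by
          have := Q_shift G hab hnadj (y b) y
          rw [← hy'] at this
          rw [this]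
          have hb0 : 0 ≤ y b := hy b
          nlinarith [hL]
        calc Q G y ≤ Q G y' := hQle
          _ ≤ (1 - 1/(G.cliqueNum : ℝ)) * (∑ k, y' k)^2 := ih y' hy'nn hcard'
          _ = (1 - 1/(G.cliqueNum : ℝ)) * (∑ k, y k)^2 := by rw [hsum']
      rcases le_total (∑ t, G.adjMatrix ℝ j t * y t) (∑ t, G.adjMatrix ℝ i t * y t) with h | h
      · exact step i j hi' hj' hne hadj h
      · exact step j i hj' hi' hne.symm (fun h' => hadj (G.adj_symm h')) h

lemma MS (G : SimpleGraph V) [DecidableRel G.Adj] (y : V → ℝ) (hy : ∀ i, 0 ≤ y i) :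
    Q G y ≤ (1 - 1/(G.cliqueNum : ℝ)) * (∑ i, y i)^2 :=
  MS_aux G _ y hy le_rfl

theorem spectral_turan (G : SimpleGraph V) [DecidableRel G.Adj] :
    (graphEig G 0) ^ 2 ≤
      2 * ((G.cliqueNum : ℝ) - 1) / (G.cliqueNum : ℝ) * G.edgeFinset.card := by
  classical
  rcases isEmpty_or_nonempty V with hV | hV
  · have h0 : graphEig G 0 = 0 := by
      unfold graphEig
      rw [Finset.univ_eq_empty]
      simp
    have hm : G.edgeFinset = ∅ := by
      apply Finset.eq_empty_of_forall_notMem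
      intro e he
      induction e with
      | h a b => exact hV.elim a
    rw [h0, hm]; simp
  · -- eigenvector setup
    obtain ⟨i0, hi0⟩ : ∃ i : V, (adjH G).eigenvalues i = graphEig G 0 := by
      have hlen : 0 < ((Finset.univ.val.map (adjH G).eigenvalues).sort (· ≥ ·)).length := by
        rw [Multiset.length_sort, Multiset.card_map]
        simpa [Finset.card_univ] using Fintype.card_pos
      have hmem : graphEig G 0 ∈ ((Finset.univ.val.map (adjH G).eigenvalues).sort (· ≥ ·)) := by
        unfold graphEig
        rw [List.getD_eq_getElem _ _ hlen]
        exact List.getElem_mem hlen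
      rw [Multiset.mem_sort, Multiset.mem_map] at hmem
      obtain ⟨i, -, hi⟩ := hmem
      exact ⟨i, hi⟩
    set μ := graphEig G 0 with hμdef
    set x : V → ℝ := ⇑((adjH G).eigenvectorBasis i0) with hxdef
    have hx : G.adjMatrix ℝ *ᵥ x = μ • x := by
      rw [hxdef, (adjH G).mulVec_eigenvectorBasis, hi0]
    have hnorm : ∑ k, x k ^ 2 = 1 := by
      have hn : ‖(adjH G).eigenvectorBasis i0‖ = 1 :=
        (adjH G).eigenvectorBasis.orthonormal.1 i0
      have h2 : (inner ℝ ((adjH G).eigenvectorBasis i0) ((adjH G).eigenvectorBasis i0) : ℝ) = 1 := by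
        rw [real_inner_self_eq_norm_sq, hn]; norm_num
      rw [PiLp.inner_apply] at h2
      simp only [RCLike.inner_apply, starRingEnd_apply, star_trivial] at h2
      rw [← h2]
      apply Finset.sum_congr rfl; intro k _; rw [sq]
    have hμQ : μ = Q G x := by
      have hk : ∀ k, (G.adjMatrix ℝ *ᵥ x) k = ∑ t, G.adjMatrix ℝ k t * x t := by
        intro k; simp [Matrix.mulVec, dotProduct]
      calc μ = μ * ∑ k, x k ^ 2 := by rw [hnorm]; ring
        _ = ∑ k, x k * (μ • x) k := by
            rw [Finset.mul_sum]; apply Finset.sum_congr rfl; intro k _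
            simp [Pi.smul_apply]; ring
        _ = ∑ k, x k * (G.adjMatrix ℝ *ᵥ x) k := by rw [hx]
        _ = Q G x := by
            unfold Q
            apply Finset.sum_congr rfl; intro k _
            rw [hk k, Finset.mul_sum]
            apply Finset.sum_congr rfl; intro t _; ring
    set z : V → ℝ := fun k => |x k| with hzdef
    have hznn : ∀ k, 0 ≤ z k := fun k => abs_nonneg _
    have hAnn : ∀ a b, 0 ≤ G.adjMatrix ℝ a b := by
      intro a b; by_cases h : G.Adj a b <;> simp [h]
    have hA2 : ∀ a b, G.adjMatrix ℝ a b * G.adjMatrix ℝ a b = G.adjMatrix ℝ a b := by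
      intro a b; by_cases h : G.Adj a b <;> simp [h]
    have habs : |Q G x| ≤ Q G z := by
      unfold Q
      calc |∑ i, ∑ j, G.adjMatrix ℝ i j * (x i * x j)|
          ≤ ∑ i, |∑ j, G.adjMatrix ℝ i j * (x i * x j)| := Finset.abs_sum_le_sum_abs _ _
        _ ≤ ∑ i, ∑ j, |G.adjMatrix ℝ i j * (x i * x j)| := by
            apply Finset.sum_le_sum; intro i _; exact Finset.abs_sum_le_sum_abs _ _
        _ = ∑ i, ∑ j, G.adjMatrix ℝ i j * (z i * z j) := by
            apply Finset.sum_congr rfl; intro i _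
            apply Finset.sum_congr rfl; intro j _
            rw [abs_mul, abs_mul, abs_of_nonneg (hAnn i j)]
    have hQznn : 0 ≤ Q G z := le_trans (abs_nonneg _) habs
    have h1 : μ ^ 2 ≤ (Q G z) ^ 2 := by
      rw [hμQ]
      have := abs_le.mp habs
      exact sq_le_sq' this.1 this.2
    -- Cauchy–Schwarz step
    set w : V → ℝ := fun k => z k ^ 2 with hwdef
    have h2 : (Q G z) ^ 2 ≤ (2 * (G.edgeFinset.card : ℝ)) * Q G w := by
      have hCS := sum_mul_sq_le_sq_mul_sq (Finset.univ ×ˢ Finset.univ)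
        (fun p : V × V => G.adjMatrix ℝ p.1 p.2)
        (fun p : V × V => G.adjMatrix ℝ p.1 p.2 * (z p.1 * z p.2))
      have e1 : ∑ p ∈ Finset.univ ×ˢ Finset.univ,
          (G.adjMatrix ℝ p.1 p.2) * (G.adjMatrix ℝ p.1 p.2 * (z p.1 * z p.2)) = Q G z := by
        rw [Finset.sum_product]
        unfold Q
        apply Finset.sum_congr rfl; intro i _
        apply Finset.sum_congr rfl; intro j _
        rw [← mul_assoc, hA2]
      have e2 : ∑ p ∈ Finset.univ ×ˢ Finset.univ, (G.adjMatrix ℝ p.1 p.2) ^ 2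
          = 2 * (G.edgeFinset.card : ℝ) := by
        rw [Finset.sum_product, ← sum_sum_adj G]
        apply Finset.sum_congr rfl; intro i _
        apply Finset.sum_congr rfl; intro j _
        rw [sq, hA2]
      have e3 : ∑ p ∈ Finset.univ ×ˢ Finset.univ,
          (G.adjMatrix ℝ p.1 p.2 * (z p.1 * z p.2)) ^ 2 = Q G w := by
        rw [Finset.sum_product]
        unfold Q
        apply Finset.sum_congr rfl; intro i _
        apply Finset.sum_congr rfl; intro j _
        rw [hwdef]
        simp only []
        rw [mul_pow, sq (G.adjMatrix ℝ i j), hA2]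
        ring
      rw [e1, e2, e3] at hCS
      exact hCS
    have hsumw : ∑ k, w k = 1 := by
      rw [← hnorm]; apply Finset.sum_congr rfl; intro k _
      rw [hwdef]; simp [hzdef, sq_abs]
    have h3 : Q G w ≤ (1 - 1/(G.cliqueNum : ℝ)) := by
      have := MS G w (fun k => sq_nonneg _)
      rwa [hsumw, one_pow, mul_one] at this
    -- clique number ≥ 1
    have hω1 : 1 ≤ G.cliqueNum := by
      obtain ⟨v⟩ := hV
      have hcl : G.IsClique (({v} : Finset V) : Set V) := by
        simp [SimpleGraph.isClique_iff, Set.pairwise_singleton]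
      have := SimpleGraph.IsClique.card_le_cliqueNum (tc := hcl)
      simpa using this
    have hωpos : (0:ℝ) < (G.cliqueNum : ℝ) := by exact_mod_cast hω1
    have hmnn : (0:ℝ) ≤ 2 * (G.edgeFinset.card : ℝ) := by positivity
    have hfinal : μ ^ 2 ≤ 2 * (G.edgeFinset.card : ℝ) * (1 - 1/(G.cliqueNum : ℝ)) :=
      le_trans h1 (le_trans h2 (mul_le_mul_of_nonneg_left h3 hmnn))
    have heq : 2 * ((G.cliqueNum : ℝ) - 1) / (G.cliqueNum : ℝ) * G.edgeFinset.card
        = 2 * (G.edgeFinset.card : ℝ) * (1 - 1/(G.cliqueNum : ℝ)) := by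
      field_simp
    rw [heq]
    exact hfinal
end

section
/- (Ando–Lin style decomposition lemma) Let G be a graph with m edges, A_G its adjacency matrix, μ₁ ≥ μ₂ its two largest eigenvalues with orthonormal eigenvectors v₁, v₂, and let r > 1. If ∑_{ij ∈ E(G)} (μ₁ v₁(i)v₁(j) + μ₂ v₂(i)v₂(j))² ≤ ((r−1)/r) ∑_{i,j ∈ V(G)} (μ₁ v₁(i)v₁(j) + μ₂ v₂(i)v₂(j))², then μ₁² + μ₂² ≤ (2(r−1)/r)·m. -/
/-! Put `B = μ₁ v₁ v₁ᵀ + μ₂ v₂ v₂ᵀ` and `S = μ₁² + μ₂²`. Orthonormality gives `∑_{i,j} B_{ij}² = S`,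
and the eigenvector equations give `∑_{i ~ j} B_{ij} = ∑_{i,j} A_{ij} B_{ij} = S`. Cauchy–Schwarz over
the `2m` ordered adjacent pairs then yields `S² ≤ 2m ∑_{i ~ j} B_{ij}² ≤ 2m (r - 1)/r · S`, and
cancelling `S ≥ 0` gives the bound. -/

open Matrix Finset SimpleGraph

variable {V : Type*} [Fintype V] [DecidableEq V]

set_option linter.unusedSectionVars false

section RankTwo

variable {n R : Type*} [Fintype n] [CommRing R]

lemma sum_sum_mul_mul_eq_dotProduct_mulVec (A : Matrix n n R) (u w : n → R) :
    ∑ i, ∑ j, A i j * (u i * w j) = u ⬝ᵥ (A *ᵥ w) := by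
  simp only [dotProduct, mulVec, Finset.mul_sum]
  exact Finset.sum_congr rfl fun i _ => Finset.sum_congr rfl fun j _ => by ring

lemma sum_sum_rankTwo_sq_of_orthonormal (a b : R) {v₁ v₂ : n → R}
    (hn₁ : v₁ ⬝ᵥ v₁ = 1) (hn₂ : v₂ ⬝ᵥ v₂ = 1) (ho : v₁ ⬝ᵥ v₂ = 0) :
    ∑ i, ∑ j, (a * v₁ i * v₁ j + b * v₂ i * v₂ j) ^ 2 = a ^ 2 + b ^ 2 := by
  have hexpand : ∀ i j, (a * v₁ i * v₁ j + b * v₂ i * v₂ j) ^ 2 =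
      a ^ 2 * ((v₁ i * v₁ i) * (v₁ j * v₁ j)) + 2 * a * b * ((v₁ i * v₂ i) * (v₁ j * v₂ j))
        + b ^ 2 * ((v₂ i * v₂ i) * (v₂ j * v₂ j)) := fun i j => by ring
  simp only [hexpand, Finset.sum_add_distrib, ← Finset.mul_sum, ← Finset.sum_mul]
  simp only [dotProduct] at hn₁ hn₂ ho
  rw [hn₁, hn₂, ho]
  ring

lemma sum_sum_mul_rankTwo_of_mulVec_eq_smul (A : Matrix n n R) {a b : R} {v₁ v₂ : n → R}
    (h₁ : A *ᵥ v₁ = a • v₁) (h₂ : A *ᵥ v₂ = b • v₂) (hn₁ : v₁ ⬝ᵥ v₁ = 1) (hn₂ : v₂ ⬝ᵥ v₂ = 1) :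
    ∑ i, ∑ j, A i j * (a * v₁ i * v₁ j + b * v₂ i * v₂ j) = a ^ 2 + b ^ 2 := by
  have hsplit : ∀ i j, A i j * (a * v₁ i * v₁ j + b * v₂ i * v₂ j) =
      a * (A i j * (v₁ i * v₁ j)) + b * (A i j * (v₂ i * v₂ j)) := fun i j => by ring
  simp only [hsplit, Finset.sum_add_distrib, ← Finset.mul_sum,
    sum_sum_mul_mul_eq_dotProduct_mulVec, h₁, h₂, dotProduct_smul, hn₁, hn₂, smul_eq_mul]
  ring

end RankTwo

namespace SimpleGraph

variable {V R : Type*} [Fintype V] (G : SimpleGraph V) [DecidableRel G.Adj]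

lemma sum_sum_ite_adj_eq_sum_sum_adjMatrix_mul [NonAssocSemiring R] (f : V → V → R) :
    ∑ i, ∑ j, (if G.Adj i j then f i j else 0) = ∑ i, ∑ j, G.adjMatrix R i j * f i j := by
  simp only [adjMatrix_apply, ite_mul, one_mul, zero_mul]

lemma sq_sum_sum_ite_adj_le [DecidableEq V] [CommRing R] [LinearOrder R] [IsStrictOrderedRing R]
    (f : V → V → R) :
    (∑ i, ∑ j, if G.Adj i j then f i j else 0) ^ 2
      ≤ 2 * #G.edgeFinset * ∑ i, ∑ j, if G.Adj i j then f i j ^ 2 else 0 := by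
  have hpairs (g : V → V → R) : ∑ i, ∑ j, (if G.Adj i j then g i j else 0)
      = ∑ p ∈ univ.filter (fun p : V × V => G.Adj p.1 p.2), g p.1 p.2 := by
    rw [Finset.sum_filter, ← Finset.sum_product']
    rfl
  have hcard : (2 * #G.edgeFinset : R) = #(univ.filter fun p : V × V => G.Adj p.1 p.2) := by
    exact_mod_cast G.two_mul_card_edgeFinset
  rw [hpairs, hpairs, hcard]
  exact sq_sum_le_card_mul_sum_sq

end SimpleGraph

theorem ando_lin_decomposition (G : SimpleGraph V) [DecidableRel G.Adj]
    (v₁ v₂ : V → ℝ) (r : ℝ) (hr : 1 < r)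
    (h1 : G.adjMatrix ℝ *ᵥ v₁ = graphEig G 0 • v₁)
    (h2 : G.adjMatrix ℝ *ᵥ v₂ = graphEig G 1 • v₂)
    (hn1 : v₁ ⬝ᵥ v₁ = 1) (hn2 : v₂ ⬝ᵥ v₂ = 1) (ho : v₁ ⬝ᵥ v₂ = 0)
    (h : ∑ i, ∑ j,
        (if G.Adj i j then (graphEig G 0 * v₁ i * v₁ j + graphEig G 1 * v₂ i * v₂ j) ^ 2 else 0)
      ≤ (r - 1) / r * ∑ i, ∑ j,
          (graphEig G 0 * v₁ i * v₁ j + graphEig G 1 * v₂ i * v₂ j) ^ 2) :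
    (graphEig G 0) ^ 2 + (graphEig G 1) ^ 2 ≤ 2 * (r - 1) / r * G.edgeFinset.card := by
  set S := graphEig G 0 ^ 2 + graphEig G 1 ^ 2
  set m : ℝ := (#G.edgeFinset : ℝ)
  have hedges : ∑ i, ∑ j, (if G.Adj i j
      then graphEig G 0 * v₁ i * v₁ j + graphEig G 1 * v₂ i * v₂ j else 0) = S := by
    rw [G.sum_sum_ite_adj_eq_sum_sum_adjMatrix_mul]
    exact sum_sum_mul_rankTwo_of_mulVec_eq_smul _ h1 h2 hn1 hn2
  rw [sum_sum_rankTwo_sq_of_orthonormal _ _ hn1 hn2 ho] at h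
  have hcs := G.sq_sum_sum_ite_adj_le
    fun i j => graphEig G 0 * v₁ i * v₁ j + graphEig G 1 * v₂ i * v₂ j
  rw [hedges] at hcs
  have hS : S ^ 2 ≤ (2 * (r - 1) / r * m) * S := by
    calc S ^ 2 ≤ 2 * m * ((r - 1) / r * S) := hcs.trans (by gcongr)
      _ = (2 * (r - 1) / r * m) * S := by ring
  have hc : 0 ≤ 2 * (r - 1) / r * m := by
    have : 0 < r - 1 := sub_pos.2 hr
    have : 0 < r := by linarith
    positivity
  nlinarith [sq_nonneg (graphEig G 0), sq_nonneg (graphEig G 1)]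
end

section
/- Let X, Y be real symmetric matrices indexed by V(G) with X + Y = A_G (so Y_{ij} = −X_{ij} whenever ij ∉ E) and ⟨X,Y⟩ = 0 in the Frobenius inner product. Suppose ∑_{ij ∈ E} X_{ij}² ≤ (r−1) ∑_{ij ∉ E} X_{ij}² for some r > 1. Then ∑_{i,j} Y_{ij}² ≥ (1/(r−1)) ∑_{i,j} X_{ij}². -/
open Matrix Finset SimpleGraph

variable {V : Type*} [Fintype V] [DecidableEq V]

set_option linter.unusedSectionVars false

/-!
Split the entries into those on `p` (the edges) and those off `p`, and write
`a = ∑_p x²`, `b = ∑_{¬p} x²`, `c = ∑_p y²`. Since `y = -x` off `p`, orthogonality says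
`∑_p x y = b`, so Cauchy–Schwarz gives `b² ≤ a c`. Together with `a ≤ (r - 1) b` this forces
`b ≤ (r - 1) c`, whence `(a + b) / (r - 1) ≤ b + b / (r - 1) ≤ b + c`.
-/

lemma one_div_mul_add_le_add_of_sq_le_mul {a b c r : ℝ} (hc : 0 ≤ c) (hr : 1 < r)
    (hab : a ≤ (r - 1) * b) (hbac : b ^ 2 ≤ a * c) :
    1 / (r - 1) * (a + b) ≤ c + b := by
  have hr₀ : 0 < r - 1 := sub_pos.mpr hr
  have hbc : b ≤ (r - 1) * c := by
    rcases le_or_gt b 0 with hb | hb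
    · exact hb.trans (by positivity)
    · have : b * b ≤ b * ((r - 1) * c) := by
        nlinarith [mul_le_mul_of_nonneg_right hab hc]
      exact le_of_mul_le_mul_left this hb
  rw [one_div_mul_eq_div, div_le_iff₀ hr₀]
  nlinarith

namespace Finset

variable {ι : Type*} [Fintype ι] (p : ι → Prop) [DecidablePred p] {x y : ι → ℝ}

lemma sum_mul_eq_sum_filter_mul_sub_sum_filter_not_sq (hyx : ∀ i, ¬ p i → y i = -x i) :
    ∑ i, x i * y i = ∑ i with p i, x i * y i - ∑ i with ¬ p i, x i ^ 2 := by
  rw [← sum_filter_add_sum_filter_not univ p, sub_eq_add_neg, ← sum_neg_distrib]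
  congr 1
  refine sum_congr rfl fun i hi => ?_
  rw [hyx i (mem_filter.mp hi).2]
  ring

lemma sq_sum_filter_not_sq_le_of_sum_mul_eq_zero (hyx : ∀ i, ¬ p i → y i = -x i)
    (hxy : ∑ i, x i * y i = 0) :
    (∑ i with ¬ p i, x i ^ 2) ^ 2 ≤ (∑ i with p i, x i ^ 2) * ∑ i with p i, y i ^ 2 := by
  have hcross : ∑ i with p i, x i * y i = ∑ i with ¬ p i, x i ^ 2 := by
    rw [sum_mul_eq_sum_filter_mul_sub_sum_filter_not_sq p hyx] at hxy
    linarith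
  rw [← hcross]
  exact sum_mul_sq_le_sq_mul_sq _ x y

theorem one_div_mul_sum_sq_le_sum_sq (hyx : ∀ i, ¬ p i → y i = -x i)
    (hxy : ∑ i, x i * y i = 0) {r : ℝ} (hr : 1 < r)
    (h : ∑ i with p i, x i ^ 2 ≤ (r - 1) * ∑ i with ¬ p i, x i ^ 2) :
    1 / (r - 1) * ∑ i, x i ^ 2 ≤ ∑ i, y i ^ 2 := by
  have hy : ∑ i, y i ^ 2 = ∑ i with p i, y i ^ 2 + ∑ i with ¬ p i, x i ^ 2 := by
    rw [← sum_filter_add_sum_filter_not univ p]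
    congr 1
    exact sum_congr rfl fun i hi => by rw [hyx i (mem_filter.mp hi).2, neg_sq]
  rw [← sum_filter_add_sum_filter_not univ p, hy]
  exact one_div_mul_add_le_add_of_sq_le_mul (by positivity) hr h
    (sq_sum_filter_not_sq_le_of_sum_mul_eq_zero p hyx hxy)

end Finset

theorem frobenius_orthogonal_decomposition_general (G : SimpleGraph V) [DecidableRel G.Adj]
    (X Y : Matrix V V ℝ)
    (hXY : X + Y = G.adjMatrix ℝ)
    (hfro : ∑ i, ∑ j, X i j * Y i j = 0)
    (r : ℝ) (hr : 1 < r)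
    (h : ∑ i, ∑ j, (if G.Adj i j then X i j ^ 2 else 0)
        ≤ (r - 1) * ∑ i, ∑ j, (if ¬ G.Adj i j then X i j ^ 2 else 0)) :
    (1 / (r - 1)) * ∑ i, ∑ j, X i j ^ 2 ≤ ∑ i, ∑ j, Y i j ^ 2 := by
  have hYX : ∀ q : V × V, ¬ G.Adj q.1 q.2 → Y q.1 q.2 = -X q.1 q.2 := fun q hq => by
    have := congrFun₂ hXY q.1 q.2
    rw [Matrix.add_apply, adjMatrix_apply, if_neg hq] at this
    linarith
  simp only [← Fintype.sum_prod_type'] at hfro h ⊢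
  simp only [← sum_filter] at h
  exact one_div_mul_sum_sq_le_sum_sq (fun q : V × V => G.Adj q.1 q.2) hYX hfro hr h

theorem frobenius_orthogonal_decomposition (G : SimpleGraph V) [DecidableRel G.Adj]
    (X Y : Matrix V V ℝ) (hXs : X.IsSymm) (hYs : Y.IsSymm)
    (hXY : X + Y = G.adjMatrix ℝ)
    (hfro : ∑ i, ∑ j, X i j * Y i j = 0)
    (r : ℝ) (hr : 1 < r)
    (h : ∑ i, ∑ j, (if G.Adj i j then X i j ^ 2 else 0)
        ≤ (r - 1) * ∑ i, ∑ j, (if ¬ G.Adj i j then X i j ^ 2 else 0)) :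
    (1 / (r - 1)) * ∑ i, ∑ j, X i j ^ 2 ≤ ∑ i, ∑ j, Y i j ^ 2 :=
  frobenius_orthogonal_decomposition_general G X Y hXY hfro r hr h
end

section
/- (Main theorem) Let G be a d-regular graph with m edges and clique number ω, and suppose G is not the complete graph K_ω. Then μ₁(G)² + μ₂(G)² ≤ (2(ω−1)/ω)·m, where μ₁, μ₂ are the two largest adjacency eigenvalues. -/
open Matrix Finset SimpleGraph

variable {V : Type*} [Fintype V] [DecidableEq V]

set_option linter.unusedSectionVars false

namespace BN


/-- all-ones vector -/
def ones : V → ℝ := fun _ => 1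

lemma dot_sum_left {ι : Type*} (s : Finset ι) (f : ι → V → ℝ) (y : V → ℝ) :
    (∑ i ∈ s, f i) ⬝ᵥ y = ∑ i ∈ s, f i ⬝ᵥ y := by
  simp only [dotProduct, Finset.sum_apply, Finset.sum_mul]
  exact Finset.sum_comm

lemma dot_sum_right {ι : Type*} (s : Finset ι) (x : V → ℝ) (f : ι → V → ℝ) :
    x ⬝ᵥ (∑ i ∈ s, f i) = ∑ i ∈ s, x ⬝ᵥ f i := by
  simp only [dotProduct, Finset.sum_apply, Finset.mul_sum]
  exact Finset.sum_comm

lemma mulVec_sum' {ι : Type*} (A : Matrix V V ℝ) (s : Finset ι) (f : ι → V → ℝ) :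
    A *ᵥ (∑ i ∈ s, f i) = ∑ i ∈ s, A *ᵥ f i := by
  funext k
  simp only [Matrix.mulVec, Finset.sum_apply]
  exact dot_sum_right s (A k) f

variable (G : SimpleGraph V) [DecidableRel G.Adj]

lemma dot_symm (x y : V → ℝ) :
    x ⬝ᵥ (G.adjMatrix ℝ *ᵥ y) = y ⬝ᵥ (G.adjMatrix ℝ *ᵥ x) := by
  rw [dotProduct_mulVec]
  nth_rewrite 1 [show (G.adjMatrix ℝ) = (G.adjMatrix ℝ)ᵀ from (G.transpose_adjMatrix).symm]
  rw [vecMul_transpose]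
  exact dotProduct_comm _ _

lemma qf_eq (x y : V → ℝ) :
    x ⬝ᵥ (G.adjMatrix ℝ *ᵥ y) = ∑ i, ∑ j, (G.adjMatrix ℝ) i j * (x i * y j) := by
  simp only [dotProduct, Matrix.mulVec, Finset.mul_sum]
  exact Finset.sum_congr rfl fun i _ => Finset.sum_congr rfl fun j _ => by ring

lemma adj_nonneg (i j : V) : (0:ℝ) ≤ (G.adjMatrix ℝ) i j := by
  rw [SimpleGraph.adjMatrix_apply]; split <;> norm_num

lemma adj_le_one (i j : V) : (G.adjMatrix ℝ) i j ≤ 1 := by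
  rw [SimpleGraph.adjMatrix_apply]; split <;> norm_num

lemma adj_symm' (i j : V) : (G.adjMatrix ℝ) i j = (G.adjMatrix ℝ) j i := by
  simp only [SimpleGraph.adjMatrix_apply, G.adj_comm]

variable {d : ℕ}

lemma mulVec_ones (hreg : G.IsRegularOfDegree d) : G.adjMatrix ℝ *ᵥ (ones : V → ℝ) = (d:ℝ) • (ones : V → ℝ) := by
  funext i
  rw [SimpleGraph.adjMatrix_mulVec_apply]
  simp [ones, hreg i]

lemma row_sum (hreg : G.IsRegularOfDegree d) (i : V) : ∑ j, (G.adjMatrix ℝ) i j = (d:ℝ) := by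
  have := congrFun (mulVec_ones G hreg) i
  simpa [Matrix.mulVec, dotProduct, ones] using this

lemma dot_ones (x : V → ℝ) : (ones : V → ℝ) ⬝ᵥ x = ∑ i, x i := by
  simp [dotProduct, ones]

lemma ones_dot : (ones : V → ℝ) ⬝ᵥ (ones : V → ℝ) = (Fintype.card V : ℝ) := by
  simp [dotProduct, ones]

/-- Rayleigh bound from regularity : `xᵀAx ≤ d ‖x‖²`. -/
lemma qf_le_reg (hreg : G.IsRegularOfDegree d) (x : V → ℝ) :
    x ⬝ᵥ (G.adjMatrix ℝ *ᵥ x) ≤ (d:ℝ) * (x ⬝ᵥ x) := by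
  rw [qf_eq]
  have step : ∀ i, ∑ j, (G.adjMatrix ℝ) i j * (x i * x j)
      ≤ ∑ j, (G.adjMatrix ℝ) i j * ((x i^2 + x j^2)/2) := by
    intro i
    refine Finset.sum_le_sum fun j _ => ?_
    refine mul_le_mul_of_nonneg_left ?_ (adj_nonneg G i j)
    nlinarith [sq_nonneg (x i - x j)]
  refine le_trans (Finset.sum_le_sum fun i _ => step i) ?_
  have expand : ∑ i, ∑ j, (G.adjMatrix ℝ) i j * ((x i^2 + x j^2)/2)
      = (∑ i, ∑ j, (G.adjMatrix ℝ) i j * x i^2)/2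
        + (∑ i, ∑ j, (G.adjMatrix ℝ) i j * x j^2)/2 := by
    have e1 : ∀ i j : V, (G.adjMatrix ℝ) i j * ((x i^2 + x j^2)/2)
        = (G.adjMatrix ℝ) i j * x i^2/2 + (G.adjMatrix ℝ) i j * x j^2/2 := fun i j => by ring
    simp_rw [e1, Finset.sum_add_distrib, ← Finset.sum_div]
  rw [expand]
  have h1 : ∑ i, ∑ j, (G.adjMatrix ℝ) i j * x i^2 = (d:ℝ) * (x ⬝ᵥ x) := by
    simp only [dotProduct, Finset.mul_sum]
    refine Finset.sum_congr rfl fun i _ => ?_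
    rw [← Finset.sum_mul, row_sum G hreg i]
    ring
  have h2 : ∑ i, ∑ j, (G.adjMatrix ℝ) i j * x j^2 = (d:ℝ) * (x ⬝ᵥ x) := by
    rw [Finset.sum_comm]
    simp only [dotProduct, Finset.mul_sum]
    refine Finset.sum_congr rfl fun j _ => ?_
    have : ∀ i, (G.adjMatrix ℝ) i j = (G.adjMatrix ℝ) j i := fun i => adj_symm' G i j
    rw [Finset.sum_congr rfl fun i _ => congrArg (· * x j^2) (this i)]
    rw [← Finset.sum_mul, row_sum G hreg j]
    ring
  rw [h1, h2]; linarith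


section Structure


variable (G : SimpleGraph V) [DecidableRel G.Adj]

/-- Structure of the two largest eigenvalues. -/
lemma spectrum_structure (hn : 2 ≤ Fintype.card V) :
    ∃ i₀ j₀ : V, i₀ ≠ j₀ ∧ (adjH G).eigenvalues i₀ = graphEig G 0 ∧
      (adjH G).eigenvalues j₀ = graphEig G 1 ∧
      (∀ i, (adjH G).eigenvalues i ≤ graphEig G 0) ∧
      (∀ i, i ≠ i₀ → (adjH G).eigenvalues i ≤ graphEig G 1) ∧
      graphEig G 1 ≤ graphEig G 0 := by
  classical
  set eig := (adjH G).eigenvalues with heig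
  set M : Multiset ℝ := Finset.univ.val.map eig with hM
  have hlen : (M.sort (· ≥ ·)).length = Fintype.card V := by
    rw [Multiset.length_sort]; simp [hM]
  have hsorted := Multiset.pairwise_sort M (· ≥ ·)
  have hcoe : ((M.sort (· ≥ ·) : List ℝ) : Multiset ℝ) = M := Multiset.sort_eq _ _
  obtain ⟨a, l', hal⟩ : ∃ a l', M.sort (· ≥ ·) = a :: l' := by
    cases h : M.sort (· ≥ ·) with
    | nil => rw [h] at hlen; simp at hlen; omega
    | cons a l' => exact ⟨a, l', rfl⟩
  obtain ⟨b, t, hbt⟩ : ∃ b t, l' = b :: t := by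
    cases h : l' with
    | nil => rw [h] at hal; rw [hal] at hlen; simp at hlen; omega
    | cons b t => exact ⟨b, t, rfl⟩
  subst hbt
  have hg0 : graphEig G 0 = a := by rw [graphEig]; rw [← heig, ← hM, hal]; rfl
  have hg1 : graphEig G 1 = b := by rw [graphEig]; rw [← heig, ← hM, hal]; rfl
  rw [hal] at hsorted hcoe
  have hab : a ≥ b ∧ ∀ c ∈ t, b ≥ c := by
    rw [List.pairwise_cons] at hsorted
    obtain ⟨h1, h2⟩ := hsorted
    rw [List.pairwise_cons] at h2
    exact ⟨h1 b (by simp), h2.1⟩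
  -- a ∈ M
  have haM : a ∈ M := by rw [← hcoe]; simp
  obtain ⟨i₀, _, hi₀⟩ := Multiset.mem_map.mp haM
  -- M = a ::ₘ rest with rest = map over erase
  have huniv : (Finset.univ.val : Multiset V) = i₀ ::ₘ Finset.univ.val.erase i₀ :=
    (Multiset.cons_erase (by simp)).symm
  have hMsplit : M = a ::ₘ (Finset.univ.val.erase i₀).map eig := by
    rw [hM]; nth_rewrite 1 [huniv]; rw [Multiset.map_cons, hi₀]
  have hM2 : ((b :: t : List ℝ) : Multiset ℝ) = (Finset.univ.val.erase i₀).map eig := by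
    have : a ::ₘ ((b :: t : List ℝ) : Multiset ℝ) = a ::ₘ (Finset.univ.val.erase i₀).map eig := by
      rw [← hMsplit, ← hcoe]; rfl
    exact (Multiset.cons_inj_right a).mp this
  have hnodup : (Finset.univ.val : Multiset V).Nodup := Finset.univ.nodup
  -- j₀
  have hbM : b ∈ (Finset.univ.val.erase i₀).map eig := by rw [← hM2]; simp
  obtain ⟨j₀, hj₀mem, hj₀⟩ := Multiset.mem_map.mp hbM
  have hj₀ne : j₀ ≠ i₀ := ((hnodup.mem_erase_iff).mp hj₀mem).1
  refine ⟨i₀, j₀, hj₀ne.symm, by rw [hg0]; exact hi₀, by rw [hg1]; exact hj₀, ?_, ?_, ?_⟩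
  · -- all ≤ a
    intro i
    have : eig i ∈ M := by rw [hM]; exact Multiset.mem_map_of_mem _ (by simp)
    rw [← hcoe] at this
    rw [hg0]
    rcases List.mem_cons.mp (Multiset.mem_coe.mp this) with h | h
    · exact le_of_eq h
    · rcases List.mem_cons.mp h with h' | h'
      · exact h' ▸ hab.1
      · exact le_trans (hab.2 _ h') hab.1
  · -- all except i₀ ≤ b
    intro i hi
    have : eig i ∈ (Finset.univ.val.erase i₀).map eig :=
      Multiset.mem_map_of_mem _ ((hnodup.mem_erase_iff).mpr ⟨hi, by simp⟩)
    rw [← hM2] at this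
    rw [hg1]
    rcases List.mem_cons.mp (Multiset.mem_coe.mp this) with h' | h'
    · exact le_of_eq h'
    · exact hab.2 _ h'
  · rw [hg0, hg1]; exact hab.1

end Structure

section Eigen
lemma equiv_sum_smul (f : V → EuclideanSpace ℝ V) (c : V → ℝ) :
    (WithLp.equiv 2 (V → ℝ)) (∑ i, c i • f i) = ∑ i, c i • (WithLp.equiv 2 (V → ℝ)) (f i) := by
  have h := map_sum (WithLp.linearEquiv 2 ℝ (V → ℝ)) (fun i => c i • f i) Finset.univ
  have h2 : ∀ i, (WithLp.linearEquiv 2 ℝ (V → ℝ)) (c i • f i)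
      = c i • (WithLp.linearEquiv 2 ℝ (V → ℝ)) (f i) := fun i =>
    LinearEquiv.map_smul _ _ _
  rw [show (WithLp.equiv 2 (V → ℝ)) (∑ i, c i • f i)
      = (WithLp.linearEquiv 2 ℝ (V → ℝ)) (∑ i, c i • f i) from rfl, h]
  refine Finset.sum_congr rfl fun i _ => ?_
  rw [h2 i]; rfl

variable (G : SimpleGraph V) [DecidableRel G.Adj]

/-- the `i`-th eigenvector, as a plain function -/
noncomputable def evec (i : V) : V → ℝ :=
  (WithLp.equiv 2 (V → ℝ)) ((adjH G).eigenvectorBasis i)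

lemma evec_mulVec (i : V) :
    G.adjMatrix ℝ *ᵥ evec G i = (adjH G).eigenvalues i • evec G i :=
  (adjH G).mulVec_eigenvectorBasis i

lemma inner_eq_dot (x y : EuclideanSpace ℝ V) :
    (inner ℝ x y : ℝ) = (WithLp.equiv 2 (V → ℝ)) x ⬝ᵥ (WithLp.equiv 2 (V → ℝ)) y := by
  rw [PiLp.inner_apply]
  simp only [RCLike.inner_apply, starRingEnd_apply, star_trivial]
  exact Finset.sum_congr rfl fun _ _ => mul_comm _ _

lemma evec_ortho (i j : V) :
    evec G i ⬝ᵥ evec G j = if i = j then (1:ℝ) else 0 := by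
  have h := (orthonormal_iff_ite.mp (adjH G).eigenvectorBasis.orthonormal) i j
  rw [inner_eq_dot] at h
  exact h

lemma evec_expand (x : V → ℝ) :
    (∑ i, (evec G i ⬝ᵥ x) • evec G i) = x := by
  have h := (adjH G).eigenvectorBasis.sum_repr' ((WithLp.equiv 2 (V → ℝ)).symm x)
  have h2 : ∀ i, (inner ℝ ((adjH G).eigenvectorBasis i) ((WithLp.equiv 2 (V → ℝ)).symm x) : ℝ)
      = evec G i ⬝ᵥ x := by
    intro i
    rw [inner_eq_dot, Equiv.apply_symm_apply]
    rfl
  have h3 := congrArg (WithLp.equiv 2 (V → ℝ)) h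
  rw [Equiv.apply_symm_apply] at h3
  calc ∑ i, (evec G i ⬝ᵥ x) • evec G i
      = ∑ i, (inner ℝ ((adjH G).eigenvectorBasis i) ((WithLp.equiv 2 (V → ℝ)).symm x) : ℝ)
          • (WithLp.equiv 2 (V → ℝ)) ((adjH G).eigenvectorBasis i) :=
        Finset.sum_congr rfl fun i _ => by rw [h2 i]; rfl
    _ = x := by rw [← equiv_sum_smul]; exact h3

lemma qf_expand (x : V → ℝ) :
    x ⬝ᵥ (G.adjMatrix ℝ *ᵥ x) = ∑ i, (adjH G).eigenvalues i * (evec G i ⬝ᵥ x)^2 := by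
  have hAx : G.adjMatrix ℝ *ᵥ x
      = ∑ i, ((evec G i ⬝ᵥ x) * (adjH G).eigenvalues i) • evec G i := by
    conv_lhs => rw [← evec_expand G x]
    rw [show ∀ y : V → ℝ, G.adjMatrix ℝ *ᵥ y = (G.adjMatrix ℝ).mulVecLin y from fun y => rfl]
    rw [map_sum]
    refine Finset.sum_congr rfl fun i _ => ?_
    rw [LinearMap.map_smul, Matrix.mulVecLin_apply, evec_mulVec, smul_smul]
  rw [hAx]
  rw [show x ⬝ᵥ (∑ i, ((evec G i ⬝ᵥ x) * (adjH G).eigenvalues i) • evec G i)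
      = ∑ i, x ⬝ᵥ (((evec G i ⬝ᵥ x) * (adjH G).eigenvalues i) • evec G i) by
    simp only [dotProduct, Finset.sum_apply, Finset.mul_sum, Pi.smul_apply, smul_eq_mul]
    exact Finset.sum_comm]
  refine Finset.sum_congr rfl fun i _ => ?_
  rw [dotProduct_smul, smul_eq_mul, dotProduct_comm]
  ring

lemma norm_expand (x : V → ℝ) :
    x ⬝ᵥ x = ∑ i, (evec G i ⬝ᵥ x)^2 := by
  nth_rewrite 1 [← evec_expand G x]
  rw [show (∑ i, (evec G i ⬝ᵥ x) • evec G i) ⬝ᵥ x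
      = ∑ i, ((evec G i ⬝ᵥ x) • evec G i) ⬝ᵥ x by
    simp only [dotProduct, Finset.sum_apply, Finset.sum_mul, Pi.smul_apply, smul_eq_mul]
    exact Finset.sum_comm]
  refine Finset.sum_congr rfl fun i _ => ?_
  rw [smul_dotProduct, smul_eq_mul, sq]


end Eigen

section MS
/-- the shifting step of the Motzkin–Straus argument -/
lemma ms_shift {k : ℕ}
    (ih : ∀ y : V → ℝ, (∀ i, 0 ≤ y i) →
      (Finset.univ.filter (fun i => y i ≠ 0)).card ≤ k →
      y ⬝ᵥ (G.adjMatrix ℝ *ᵥ y) ≤ (1 - 1/(G.cliqueNum:ℝ)) * (∑ i, y i)^2)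
    (x : V → ℝ) (hx : ∀ i, 0 ≤ x i)
    (hcard : (Finset.univ.filter (fun i => x i ≠ 0)).card ≤ k + 1)
    (u v : V) (hu : x u ≠ 0) (hv : x v ≠ 0) (huv : u ≠ v) (hnadj : ¬ G.Adj u v)
    (hle : (G.adjMatrix ℝ *ᵥ x) v ≤ (G.adjMatrix ℝ *ᵥ x) u) :
    x ⬝ᵥ (G.adjMatrix ℝ *ᵥ x) ≤ (1 - 1/(G.cliqueNum:ℝ)) * (∑ i, x i)^2 := by
  classical
  let A := G.adjMatrix ℝ
  set z : V → ℝ := fun i => (if i = u then (1:ℝ) else 0) - (if i = v then 1 else 0) with hz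
  set x' : V → ℝ := x + (x v) • z with hx'def
  have zdot : ∀ w : V → ℝ, z ⬝ᵥ w = w u - w v := by
    intro w
    simp only [hz, dotProduct, sub_mul, one_mul, zero_mul, ite_mul,
      Finset.sum_sub_distrib]
    rw [Finset.sum_ite_eq' Finset.univ u w, Finset.sum_ite_eq' Finset.univ v w]
    simp
  have dotz : ∀ w : V → ℝ, w ⬝ᵥ z = w u - w v := by
    intro w; rw [dotProduct_comm]; exact zdot w
  have hAz : A *ᵥ z = fun j => A j u - A j v := by
    funext j
    show (A j) ⬝ᵥ z = _
    exact dotz (A j)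
  have hzAz : z ⬝ᵥ (A *ᵥ z) = 0 := by
    rw [zdot, hAz]
    simp only
    have h1 : A u u = 0 := by simp [A]
    have h2 : A v v = 0 := by simp [A]
    have h3 : A u v = 0 := by simp [A, hnadj]
    have hnadj' : ¬ G.Adj v u := fun h => hnadj h.symm
    have h4 : A v u = 0 := by simp [A, hnadj']
    rw [h1, h2, h3, h4]; ring
  have hsumz : ∑ i, z i = 0 := by
    simp only [hz, Finset.sum_sub_distrib]
    rw [Finset.sum_ite_eq' Finset.univ u (fun _ => (1:ℝ)),
      Finset.sum_ite_eq' Finset.univ v (fun _ => (1:ℝ))]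
    simp
  have hsum : ∑ i, x' i = ∑ i, x i := by
    simp only [hx'def, Pi.add_apply, Pi.smul_apply, smul_eq_mul, Finset.sum_add_distrib,
      ← Finset.mul_sum, hsumz]
    ring
  have hAx' : A *ᵥ x' = A *ᵥ x + (x v) • (A *ᵥ z) := by
    rw [hx'def]
    rw [show ∀ y : V → ℝ, A *ᵥ y = A.mulVecLin y from fun y => rfl]
    rw [map_add, LinearMap.map_smul]
    rfl
  have hFx' : x' ⬝ᵥ (A *ᵥ x') = x ⬝ᵥ (A *ᵥ x)
      + 2 * (x v) * ((A *ᵥ x) u - (A *ᵥ x) v) := by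
    have e1 : z ⬝ᵥ (A *ᵥ x) = (A *ᵥ x) u - (A *ᵥ x) v := zdot _
    have e2 : x ⬝ᵥ (A *ᵥ z) = (A *ᵥ x) u - (A *ᵥ x) v := by
      rw [show A = G.adjMatrix ℝ from rfl, dot_symm]
      exact zdot _
    rw [hx'def, hAx']
    simp only [add_dotProduct, dotProduct_add, smul_dotProduct, dotProduct_smul, smul_eq_mul]
    rw [e1, e2, hzAz]
    ring
  have hx'nonneg : ∀ i, 0 ≤ x' i := by
    intro i
    simp only [hx'def, Pi.add_apply, Pi.smul_apply, smul_eq_mul, hz]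
    by_cases hiu : i = u
    · rw [if_pos hiu, if_neg (hiu ▸ huv)]
      have := hx i; have := hx v; nlinarith
    · by_cases hiv : i = v
      · rw [if_neg hiu, if_pos hiv, hiv]
        have := hx v
        linarith
      · rw [if_neg hiu, if_neg hiv]
        simpa using hx i
  have hsupp : Finset.univ.filter (fun i => x' i ≠ 0)
      ⊆ (Finset.univ.filter (fun i => x i ≠ 0)).erase v := by
    intro i hi
    rw [Finset.mem_filter] at hi
    obtain ⟨-, hine⟩ := hi
    have hxv' : x' v = 0 := by
      have hvu : ¬ (v = u) := Ne.symm huv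
      simp only [hx'def, Pi.add_apply, Pi.smul_apply, smul_eq_mul, hz, if_neg hvu, if_true]
      ring
    have hiv : i ≠ v := fun h => hine (h ▸ hxv')
    rw [Finset.mem_erase]
    refine ⟨hiv, Finset.mem_filter.mpr ⟨Finset.mem_univ _, ?_⟩⟩
    by_cases hiu : i = u
    · rw [hiu]; exact hu
    · intro h0
      apply hine
      simp only [hx'def, Pi.add_apply, Pi.smul_apply, smul_eq_mul, hz]
      rw [if_neg hiu, if_neg hiv, h0]
      ring
  have hcard' : (Finset.univ.filter (fun i => x' i ≠ 0)).card ≤ k := by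
    have h1 := Finset.card_le_card hsupp
    have hvmem : v ∈ Finset.univ.filter (fun i => x i ≠ 0) :=
      Finset.mem_filter.mpr ⟨Finset.mem_univ _, hv⟩
    rw [Finset.card_erase_of_mem hvmem] at h1
    omega
  have := ih x' hx'nonneg hcard'
  rw [hFx', hsum] at this
  have hxv := hx v
  nlinarith [this, mul_nonneg hxv (sub_nonneg.mpr hle)]


lemma ms_aux (hω : 1 ≤ G.cliqueNum) :
    ∀ k : ℕ, ∀ x : V → ℝ, (∀ i, 0 ≤ x i) →
      (Finset.univ.filter (fun i => x i ≠ 0)).card ≤ k →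
      x ⬝ᵥ (G.adjMatrix ℝ *ᵥ x) ≤ (1 - 1/(G.cliqueNum:ℝ)) * (∑ i, x i)^2 := by
  intro k
  induction k with
  | zero =>
    intro x hx hcard
    have hx0 : ∀ i, x i = 0 := by
      intro i
      by_contra h
      have : i ∈ Finset.univ.filter (fun i => x i ≠ 0) :=
        Finset.mem_filter.mpr ⟨Finset.mem_univ _, h⟩
      have := Finset.card_pos.mpr ⟨i, this⟩
      omega
    have h1 : x ⬝ᵥ (G.adjMatrix ℝ *ᵥ x) = 0 := by
      rw [qf_eq]
      refine Finset.sum_eq_zero fun i _ => Finset.sum_eq_zero fun j _ => ?_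
      rw [hx0 i]; ring
    have h2 : ∑ i, x i = 0 := Finset.sum_eq_zero fun i _ => hx0 i
    rw [h1, h2]; norm_num
  | succ k ih =>
    intro x hx hcard
    by_cases hcl : ∀ u ∈ Finset.univ.filter (fun i => x i ≠ 0),
        ∀ v ∈ Finset.univ.filter (fun i => x i ≠ 0), u ≠ v → G.Adj u v
    · -- the support is a clique
      set s := Finset.univ.filter (fun i => x i ≠ 0) with hs
      have hω' : (1:ℝ) ≤ (G.cliqueNum:ℝ) := by exact_mod_cast hω
      have h1 : x ⬝ᵥ (G.adjMatrix ℝ *ᵥ x) ≤ (∑ i, x i)^2 - ∑ i, (x i)^2 := by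
        rw [qf_eq]
        have hsq : (∑ i, x i)^2 = ∑ i, ∑ j, x i * x j := by
          rw [sq, Finset.sum_mul_sum]
        rw [hsq]
        have key : ∀ i : V, (∑ j, (G.adjMatrix ℝ) i j * (x i * x j)) + (x i)^2
            ≤ ∑ j, x i * x j := by
          intro i
          have hpt : ∀ j : V, (G.adjMatrix ℝ) i j * (x i * x j)
              + (if j = i then (x i)^2 else 0) ≤ x i * x j := by
            intro j
            by_cases hji : j = i
            · subst hji
              have hA0 : (G.adjMatrix ℝ) j j = 0 := by simp
              rw [hA0]
              simp [sq]
            · simp only [if_neg hji]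
              have ha : (G.adjMatrix ℝ) i j ≤ 1 := by
                rw [SimpleGraph.adjMatrix_apply]; split <;> norm_num
              have ha0 : (0:ℝ) ≤ (G.adjMatrix ℝ) i j := by
                rw [SimpleGraph.adjMatrix_apply]; split <;> norm_num
              nlinarith [mul_nonneg (hx i) (hx j)]
          have := Finset.sum_le_sum (fun j (_ : j ∈ Finset.univ) => hpt j)
          rw [Finset.sum_add_distrib, Finset.sum_ite_eq' Finset.univ i
            (fun _ => (x i)^2)] at this
          simpa using this
        have := Finset.sum_le_sum (fun i (_ : i ∈ Finset.univ) => key i)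
        rw [Finset.sum_add_distrib] at this
        linarith
      have hsub : s ⊆ Finset.univ := Finset.subset_univ s
      have hvanish : ∀ i ∈ Finset.univ, i ∉ s → x i = 0 := by
        intro i _ hi
        by_contra h
        exact hi (Finset.mem_filter.mpr ⟨Finset.mem_univ _, h⟩)
      have hsum_s : ∑ i, x i = ∑ i ∈ s, x i :=
        (Finset.sum_subset hsub hvanish).symm
      have hsumsq_s : ∑ i, (x i)^2 = ∑ i ∈ s, (x i)^2 :=
        (Finset.sum_subset hsub (fun i h1' h2' => by rw [hvanish i h1' h2']; ring)).symm
      have hclique : G.IsClique (s : Set V) := by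
        intro a ha b hb hab
        exact hcl a (by exact_mod_cast ha) b (by exact_mod_cast hb) hab
      have hcard_s : (s.card : ℝ) ≤ (G.cliqueNum : ℝ) := by
        exact_mod_cast SimpleGraph.IsClique.card_le_cliqueNum (tc := hclique)
      have hcs : (∑ i ∈ s, x i)^2 ≤ (s.card:ℝ) * ∑ i ∈ s, (x i)^2 := by
        have h := Finset.sum_mul_sq_le_sq_mul_sq s (fun _ => (1:ℝ)) x
        simpa using h
      have h2 : (∑ i, x i)^2 ≤ (G.cliqueNum:ℝ) * ∑ i, (x i)^2 := by
        rw [hsum_s, hsumsq_s]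
        refine le_trans hcs ?_
        have hnn : (0:ℝ) ≤ ∑ i ∈ s, (x i)^2 :=
          Finset.sum_nonneg fun i _ => sq_nonneg _
        exact mul_le_mul_of_nonneg_right hcard_s hnn
      have h3 : (∑ i, x i)^2 / (G.cliqueNum:ℝ) ≤ ∑ i, (x i)^2 := by
        rw [div_le_iff₀ (by linarith)]
        calc (∑ i, x i)^2 ≤ (G.cliqueNum:ℝ) * ∑ i, (x i)^2 := h2
          _ = (∑ i, (x i)^2) * (G.cliqueNum:ℝ) := by ring
      calc x ⬝ᵥ (G.adjMatrix ℝ *ᵥ x) ≤ (∑ i, x i)^2 - ∑ i, (x i)^2 := h1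
        _ ≤ (∑ i, x i)^2 - (∑ i, x i)^2/(G.cliqueNum:ℝ) := by linarith
        _ = (1 - 1/(G.cliqueNum:ℝ)) * (∑ i, x i)^2 := by
            field_simp
    · push_neg at hcl
      obtain ⟨u, hu, v, hv, huv, hnadj⟩ := hcl
      rw [Finset.mem_filter] at hu hv
      rcases le_total ((G.adjMatrix ℝ *ᵥ x) v) ((G.adjMatrix ℝ *ᵥ x) u) with hle | hle
      · exact ms_shift G ih x hx hcard u v hu.2 hv.2 huv hnadj hle
      · exact ms_shift G ih x hx hcard v u hv.2 hu.2 huv.symm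
          (fun h => hnadj h.symm) hle

end MS


section MainProof
variable (G : SimpleGraph V) [DecidableRel G.Adj]

lemma motzkin_straus (hω : 1 ≤ G.cliqueNum) (x : V → ℝ) (hx : ∀ i, 0 ≤ x i) :
    x ⬝ᵥ (G.adjMatrix ℝ *ᵥ x) ≤ (1 - 1/(G.cliqueNum:ℝ)) * (∑ i, x i)^2 :=
  ms_aux G hω (Finset.univ.filter (fun i => x i ≠ 0)).card x hx le_rfl

end MainProof

end BN

section Assembly
open BN
variable (G : SimpleGraph V) [DecidableRel G.Adj]

/-- main spectral facts -/
lemma main_facts (d : ℕ) (hreg : G.IsRegularOfDegree d) (hG : G ≠ ⊤) :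
    graphEig G 0 = (d:ℝ) ∧ 0 ≤ graphEig G 1 ∧ graphEig G 1 ≤ (d:ℝ) ∧
    (∃ v : V → ℝ, G.adjMatrix ℝ *ᵥ v = graphEig G 1 • v ∧ v ⬝ᵥ v = 1 ∧
      (ones : V → ℝ) ⬝ᵥ v = 0) ∧ 2 ≤ Fintype.card V ∧ 1 ≤ G.cliqueNum := by
  classical
  -- a nonadjacent pair
  obtain ⟨u0, v0, huv0, hnadj0⟩ : ∃ u v : V, u ≠ v ∧ ¬ G.Adj u v := by
    by_contra h
    push_neg at h
    apply hG
    ext u v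
    simp only [SimpleGraph.top_adj]
    exact ⟨fun ha => ha.ne, fun hne => h u v hne⟩
  have hn2 : 2 ≤ Fintype.card V := by
    have : Nontrivial V := ⟨u0, v0, huv0⟩
    exact Fintype.one_lt_card
  have hω1 : 1 ≤ G.cliqueNum := by
    have hcl : G.IsClique (↑({u0} : Finset V) : Set V) := by
      rw [Finset.coe_singleton]
      exact G.isClique_singleton u0
    have := SimpleGraph.IsClique.card_le_cliqueNum (tc := hcl)
    simpa using this
  obtain ⟨i₀, j₀, hij, hi₀, hj₀, hle1, hle2, h21⟩ := spectrum_structure G hn2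
  have heig_le : ∀ i, (adjH G).eigenvalues i ≤ (d:ℝ) := by
    intro i
    have hunit : evec G i ⬝ᵥ evec G i = 1 := by rw [evec_ortho]; simp
    have h := qf_le_reg G hreg (evec G i)
    rw [evec_mulVec, dotProduct_smul, hunit, smul_eq_mul, mul_one] at h
    linarith
  have hμ1d : graphEig G 0 = (d:ℝ) := by
    have hle' : graphEig G 0 ≤ (d:ℝ) := hi₀ ▸ heig_le i₀
    have hge : (d:ℝ) ≤ graphEig G 0 := by
      have h1 : (ones:V→ℝ) ⬝ᵥ (G.adjMatrix ℝ *ᵥ ones)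
          = (d:ℝ) * (Fintype.card V : ℝ) := by
        rw [mulVec_ones G hreg, dotProduct_smul, ones_dot]
        simp
      have h3 := qf_expand G (ones : V → ℝ)
      have h4 := norm_expand G (ones : V → ℝ)
      have h5 : ∑ i, (adjH G).eigenvalues i * (evec G i ⬝ᵥ (ones:V→ℝ))^2
          ≤ graphEig G 0 * ∑ i, (evec G i ⬝ᵥ (ones:V→ℝ))^2 := by
        rw [Finset.mul_sum]
        exact Finset.sum_le_sum fun i _ =>
          mul_le_mul_of_nonneg_right (hle1 i) (sq_nonneg _)
      rw [← h3] at h5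
      rw [← h4] at h5
      rw [h1, ones_dot] at h5
      have hNpos : (0:ℝ) < (Fintype.card V : ℝ) := by
        have : 0 < Fintype.card V := by omega
        exact_mod_cast this
      exact (mul_le_mul_iff_of_pos_right hNpos).mp (by linarith [h5])
    linarith
  have hμ2d : graphEig G 1 ≤ (d:ℝ) := hμ1d ▸ h21
  -- coefficients of ones
  have hcoef : ∀ j, ((adjH G).eigenvalues j - (d:ℝ)) * (evec G j ⬝ᵥ (ones:V→ℝ)) = 0 := by
    intro j
    have e1 : evec G j ⬝ᵥ (G.adjMatrix ℝ *ᵥ (ones:V→ℝ))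
        = (d:ℝ) * (evec G j ⬝ᵥ (ones:V→ℝ)) := by
      rw [mulVec_ones G hreg, dotProduct_smul, smul_eq_mul]
    have e2 : evec G j ⬝ᵥ (G.adjMatrix ℝ *ᵥ (ones:V→ℝ))
        = (adjH G).eigenvalues j * (evec G j ⬝ᵥ (ones:V→ℝ)) := by
      rw [dot_symm, evec_mulVec, dotProduct_smul, smul_eq_mul, dotProduct_comm]
    nlinarith [e1, e2]
  have hc0 : graphEig G 1 ≠ (d:ℝ) → ∀ j, j ≠ i₀ → evec G j ⬝ᵥ (ones:V→ℝ) = 0 := by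
    intro hd2 j hj
    have hne : (adjH G).eigenvalues j - (d:ℝ) ≠ 0 := by
      intro he
      have h1 : (adjH G).eigenvalues j = (d:ℝ) := by linarith [sub_eq_zero.mp he]
      have h2 := hle2 j hj
      rw [h1] at h2
      exact hd2 (le_antisymm hμ2d h2)
    rcases mul_eq_zero.mp (hcoef j) with h | h
    · exact absurd h hne
    · exact h
  -- μ2 ≥ 0
  have hμ2_0 : 0 ≤ graphEig G 1 := by
    by_cases hd2 : graphEig G 1 = (d:ℝ)
    · rw [hd2]; positivity
    · set xx : V → ℝ := fun i => (if i = u0 then (1:ℝ) else 0) - (if i = v0 then 1 else 0)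
        with hxx
      have hxx_sum : ∑ i, xx i = 0 := by
        simp only [hxx, Finset.sum_sub_distrib]
        rw [Finset.sum_ite_eq' Finset.univ u0 (fun _ => (1:ℝ)),
          Finset.sum_ite_eq' Finset.univ v0 (fun _ => (1:ℝ))]
        simp
      have honesxx : (ones:V→ℝ) ⬝ᵥ xx = 0 := by rw [dot_ones]; exact hxx_sum
      -- Parseval bilinear
      have hbil : (ones:V→ℝ) ⬝ᵥ xx
          = ∑ i, (evec G i ⬝ᵥ (ones:V→ℝ)) * (evec G i ⬝ᵥ xx) := by
        conv_lhs => rw [← evec_expand G (ones : V→ℝ)]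
        rw [show (∑ i, (evec G i ⬝ᵥ (ones:V→ℝ)) • evec G i) ⬝ᵥ xx
            = ∑ i, ((evec G i ⬝ᵥ (ones:V→ℝ)) • evec G i) ⬝ᵥ xx by
          simp only [dotProduct, Finset.sum_apply, Finset.sum_mul, Pi.smul_apply,
            smul_eq_mul]
          exact Finset.sum_comm]
        exact Finset.sum_congr rfl fun i _ => by rw [smul_dotProduct, smul_eq_mul]
      have hsingle : (evec G i₀ ⬝ᵥ (ones:V→ℝ)) * (evec G i₀ ⬝ᵥ xx) = 0 := by
        have : ∑ i, (evec G i ⬝ᵥ (ones:V→ℝ)) * (evec G i ⬝ᵥ xx)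
            = (evec G i₀ ⬝ᵥ (ones:V→ℝ)) * (evec G i₀ ⬝ᵥ xx) := by
          rw [← Finset.sum_subset (Finset.subset_univ {i₀})]
          · simp
          · intro j _ hj
            rw [hc0 hd2 j (by simpa using hj)]
            ring
        rw [← this, ← hbil]
        exact honesxx
      have hones_i₀ : evec G i₀ ⬝ᵥ (ones:V→ℝ) ≠ 0 := by
        intro h0
        have hall : ∀ j, evec G j ⬝ᵥ (ones:V→ℝ) = 0 := by
          intro j
          by_cases hj : j = i₀
          · rw [hj]; exact h0
          · exact hc0 hd2 j hj
        have := norm_expand G (ones : V → ℝ)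
        rw [ones_dot] at this
        simp only [hall] at this
        simp at this
        omega
      have hxx_i₀ : evec G i₀ ⬝ᵥ xx = 0 := by
        rcases mul_eq_zero.mp hsingle with h | h
        · exact absurd h hones_i₀
        · exact h
      -- Rayleigh
      have hray : xx ⬝ᵥ (G.adjMatrix ℝ *ᵥ xx) ≤ graphEig G 1 * (xx ⬝ᵥ xx) := by
        rw [qf_expand G xx, norm_expand G xx, Finset.mul_sum]
        refine Finset.sum_le_sum fun j _ => ?_
        by_cases hj : j = i₀
        · rw [hj, hxx_i₀]
          simp
        · exact mul_le_mul_of_nonneg_right (hle2 j hj) (sq_nonneg _)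
      have hdotxx : ∀ w : V → ℝ, w ⬝ᵥ xx = w u0 - w v0 := by
        intro w
        rw [dotProduct_comm]
        simp only [hxx, dotProduct, sub_mul, one_mul, zero_mul, ite_mul,
          Finset.sum_sub_distrib]
        rw [Finset.sum_ite_eq' Finset.univ u0 w, Finset.sum_ite_eq' Finset.univ v0 w]
        simp
      have hxxA : xx ⬝ᵥ (G.adjMatrix ℝ *ᵥ xx) = 0 := by
        have hAxx : G.adjMatrix ℝ *ᵥ xx = fun j => (G.adjMatrix ℝ) j u0 - (G.adjMatrix ℝ) j v0 := by
          funext j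
          exact hdotxx ((G.adjMatrix ℝ) j)
        have hxxdot : ∀ w : V → ℝ, xx ⬝ᵥ w = w u0 - w v0 := by
          intro w
          rw [dotProduct_comm]
          exact hdotxx w
        rw [hxxdot, hAxx]
        simp only
        have h1 : (G.adjMatrix ℝ) u0 u0 = 0 := by simp
        have h2 : (G.adjMatrix ℝ) v0 v0 = 0 := by simp
        have h3 : (G.adjMatrix ℝ) u0 v0 = 0 := by simp [hnadj0]
        have hnadj0' : ¬ G.Adj v0 u0 := fun h => hnadj0 h.symm
        have h4 : (G.adjMatrix ℝ) v0 u0 = 0 := by simp [hnadj0']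
        rw [h1, h2, h3, h4]; ring
      have hxxnorm : xx ⬝ᵥ xx = 2 := by
        rw [hdotxx xx]
        have h1 : xx u0 = 1 := by
          simp [hxx, huv0]
        have h2 : xx v0 = -1 := by
          simp [hxx, Ne.symm huv0]
        rw [h1, h2]
        ring
      rw [hxxA, hxxnorm] at hray
      linarith
  refine ⟨hμ1d, hμ2_0, hμ2d, ?_, hn2, hω1⟩
  -- eigenvector
  by_cases hd2 : graphEig G 1 = (d:ℝ)
  · -- both i₀ and j₀ have eigenvalue d
    have hei₀ : (adjH G).eigenvalues i₀ = graphEig G 1 := by rw [hi₀, hμ1d, hd2]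
    by_cases ha : evec G i₀ ⬝ᵥ (ones:V→ℝ) = 0
    · refine ⟨evec G i₀, ?_, ?_, ?_⟩
      · rw [evec_mulVec, hei₀]
      · rw [evec_ortho]; simp
      · rw [dotProduct_comm]; exact ha
    · set a := evec G i₀ ⬝ᵥ (ones:V→ℝ) with hadef
      set b := evec G j₀ ⬝ᵥ (ones:V→ℝ) with hbdef
      have habpos : 0 < a^2 + b^2 := by positivity
      set c := (Real.sqrt (a^2+b^2))⁻¹ with hcdef
      have hcsq : c^2 * (a^2+b^2) = 1 := by
        rw [hcdef, inv_pow, Real.sq_sqrt (le_of_lt habpos)]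
        exact inv_mul_cancel₀ (ne_of_gt habpos)
      refine ⟨c • (b • evec G i₀ - a • evec G j₀), ?_, ?_, ?_⟩
      · rw [show ∀ y : V → ℝ, G.adjMatrix ℝ *ᵥ y = (G.adjMatrix ℝ).mulVecLin y
            from fun y => rfl]
        rw [LinearMap.map_smul, map_sub, LinearMap.map_smul, LinearMap.map_smul]
        simp only [Matrix.mulVecLin_apply]
        rw [evec_mulVec, evec_mulVec, hei₀, hj₀]
        funext i
        simp only [Pi.smul_apply, Pi.sub_apply, smul_eq_mul]
        ring
      · have h1 : evec G i₀ ⬝ᵥ evec G i₀ = 1 := by rw [evec_ortho]; simp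
        have h2 : evec G j₀ ⬝ᵥ evec G j₀ = 1 := by rw [evec_ortho]; simp
        have h3 : evec G i₀ ⬝ᵥ evec G j₀ = 0 := by rw [evec_ortho, if_neg hij]
        have h4 : evec G j₀ ⬝ᵥ evec G i₀ = 0 := by rw [evec_ortho, if_neg (Ne.symm hij)]
        simp only [smul_dotProduct, dotProduct_smul, sub_dotProduct, dotProduct_sub,
          smul_eq_mul, h1, h2, h3, h4]
        ring_nf
        nlinarith [hcsq]
      · have h5 : (ones:V→ℝ) ⬝ᵥ evec G i₀ = a := by
          rw [dotProduct_comm]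
        have h6 : (ones:V→ℝ) ⬝ᵥ evec G j₀ = b := by
          rw [dotProduct_comm]
        simp only [dotProduct_smul, dotProduct_sub, smul_eq_mul, h5, h6]
        ring
  · refine ⟨evec G j₀, ?_, ?_, ?_⟩
    · rw [evec_mulVec, hj₀]
    · rw [evec_ortho]; simp
    · rw [dotProduct_comm]
      exact hc0 hd2 j₀ (Ne.symm hij)

end Assembly

lemma key_ineq (N D μ s E4 C : ℝ) (hN : 2 ≤ N) (hD : 1 ≤ D) (hμ0 : 0 ≤ μ)
    (hkey : s * D^2 = N*μ*(2*D-μ)) (hs : 0 ≤ s)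
    (hsq2 : N^2*μ^2 ≤ s^2*D^2)
    (hE4 : μ^2 ≤ N*D*E4) (hC : 0 ≤ C) :
    (N+s)^2 * (D^2+μ^2) ≤ N*D*(N*D + 2*D*s + 4*μ*s + C + s^2*E4) := by
  have h1 : 2*s*(s*D^2) = 2*s*(N*μ*(2*D-μ)) := by rw [hkey]
  have h2 : s^2*μ^2 ≤ s^2*(N*D*E4) := mul_le_mul_of_nonneg_left hE4 (sq_nonneg s)
  have h3 : 0 ≤ N*D*C := mul_nonneg (mul_nonneg (by linarith) (by linarith)) hC
  nlinarith [h1, h2, h3, hsq2]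

set_option maxHeartbeats 1000000 in
theorem bollobas_nikiforov_regular (G : SimpleGraph V) [DecidableRel G.Adj]
    (d : ℕ) (hreg : G.IsRegularOfDegree d) (hG : G ≠ ⊤) :
    (graphEig G 0) ^ 2 + (graphEig G 1) ^ 2 ≤
      2 * ((G.cliqueNum : ℝ) - 1) / (G.cliqueNum : ℝ) * G.edgeFinset.card := by
  classical
  obtain ⟨hμ1d, hμ2_0, hμ2d, ⟨vv, hvv_eig, hvv_unit, hvv_perp⟩, hn2, hω1⟩ :=
    main_facts G d hreg hG
  have hω' : (1:ℝ) ≤ (G.cliqueNum:ℝ) := by exact_mod_cast hω1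
  have hnd : (Fintype.card V : ℝ) * (d:ℝ) = 2 * (G.edgeFinset.card : ℝ) := by
    have h := G.sum_degrees_eq_twice_card_edges
    have h2 : ∑ v : V, G.degree v = Fintype.card V * d := by
      rw [Finset.sum_congr rfl fun v _ => hreg v]
      simp [mul_comm]
    rw [h2] at h
    exact_mod_cast h
  by_cases hd0 : d = 0
  · subst hd0
    have h1 : graphEig G 0 = 0 := by simpa using hμ1d
    have h2 : graphEig G 1 = 0 := le_antisymm (by simpa using hμ2d) hμ2_0
    rw [h1, h2]
    have hm : (0:ℝ) ≤ (G.edgeFinset.card : ℝ) := by positivity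
    have hpos : (0:ℝ) ≤ 2 * ((G.cliqueNum : ℝ) - 1) / (G.cliqueNum : ℝ) * G.edgeFinset.card :=
      mul_nonneg (div_nonneg (by linarith) (by linarith)) hm
    simpa using hpos
  · have hd1 : (1:ℝ) ≤ (d:ℝ) := by exact_mod_cast Nat.one_le_iff_ne_zero.mpr hd0
    have hDpos : (0:ℝ) < (d:ℝ) := by linarith
    set μ := graphEig G 1 with hμdef
    have hN2 : (2:ℝ) ≤ (Fintype.card V : ℝ) := by exact_mod_cast hn2
    set v2 : V → ℝ := fun i => (vv i)^2 with hv2def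
    obtain ⟨T, hTdef⟩ : ∃ t : ℝ, v2 ⬝ᵥ vv = t := ⟨_, rfl⟩
    obtain ⟨E4, hE4def⟩ : ∃ e : ℝ, v2 ⬝ᵥ (G.adjMatrix ℝ *ᵥ v2) = e := ⟨_, rfl⟩
    have hsum_vv : ∑ i, vv i = 0 := by rw [← BN.dot_ones]; exact hvv_perp
    have hsum_vv2 : ∑ i, (vv i)^2 = 1 := by
      have h := hvv_unit
      simp only [dotProduct] at h
      simpa [sq] using h
    have hsge : 0 ≤ (Fintype.card V:ℝ)*μ*(2*(d:ℝ)-μ)/(d:ℝ)^2 := by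
      apply div_nonneg _ (sq_nonneg _)
      have : (0:ℝ) ≤ (Fintype.card V:ℝ)*μ := mul_nonneg (by linarith) hμ2_0
      nlinarith [hμ2d]
    obtain ⟨α, hα2, hα3T⟩ : ∃ a : ℝ,
        a^2 = (Fintype.card V:ℝ)*μ*(2*(d:ℝ)-μ)/(d:ℝ)^2 ∧ 0 ≤ a^3 * (μ * T) := by
      refine ⟨(if 0 ≤ T then (1:ℝ) else -1)
        * Real.sqrt ((Fintype.card V:ℝ)*μ*(2*(d:ℝ)-μ)/(d:ℝ)^2), ?_, ?_⟩
      · rw [mul_pow, Real.sq_sqrt hsge]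
        split <;> norm_num
      · have hs := Real.sqrt_nonneg ((Fintype.card V:ℝ)*μ*(2*(d:ℝ)-μ)/(d:ℝ)^2)
        split
        · rename_i h
          simp only [one_mul]
          exact mul_nonneg (pow_nonneg hs 3) (mul_nonneg hμ2_0 h)
        · rename_i h
          push_neg at h
          have h1 : ((-1) * Real.sqrt ((Fintype.card V:ℝ)*μ*(2*(d:ℝ)-μ)/(d:ℝ)^2))^3
              = -(Real.sqrt ((Fintype.card V:ℝ)*μ*(2*(d:ℝ)-μ)/(d:ℝ)^2))^3 := by ring
          rw [h1]
          have h2 : 0 ≤ (Real.sqrt ((Fintype.card V:ℝ)*μ*(2*(d:ℝ)-μ)/(d:ℝ)^2))^3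
              * (μ * (-T)) :=
            mul_nonneg (pow_nonneg hs 3) (mul_nonneg hμ2_0 (by linarith))
          nlinarith [h2]
    set xq : V → ℝ := fun i => (1 + α * vv i)^2 with hxqdef
    have hxq_nonneg : ∀ i, 0 ≤ xq i := fun i => sq_nonneg _
    have hxq_sum : ∑ i, xq i = (Fintype.card V:ℝ) + α^2 := by
      simp only [hxqdef]
      have he : ∀ i, (1 + α * vv i)^2 = 1 + (2*α)*(vv i) + α^2*(vv i)^2 := fun i => by ring
      simp_rw [he, Finset.sum_add_distrib, ← Finset.mul_sum]
      rw [hsum_vv, hsum_vv2]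
      simp
    have hxq_decomp : xq = (BN.ones : V → ℝ) + (2*α) • vv + (α^2) • v2 := by
      funext i
      simp only [hxqdef, Pi.add_apply, Pi.smul_apply, smul_eq_mul, BN.ones, hv2def]
      ring
    have hAxq : G.adjMatrix ℝ *ᵥ xq
        = (d:ℝ) • (BN.ones:V→ℝ) + (2*α) • (μ • vv) + (α^2) • (G.adjMatrix ℝ *ᵥ v2) := by
      rw [hxq_decomp]
      rw [show ∀ y : V → ℝ, G.adjMatrix ℝ *ᵥ y = (G.adjMatrix ℝ).mulVecLin y from fun y => rfl]
      rw [map_add, map_add, LinearMap.map_smul, LinearMap.map_smul]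
      simp only [Matrix.mulVecLin_apply]
      rw [BN.mulVec_ones G hreg, hvv_eig]
    have hE3 : vv ⬝ᵥ (G.adjMatrix ℝ *ᵥ v2) = μ * T := by
      rw [BN.dot_symm, hvv_eig, dotProduct_smul, smul_eq_mul, hTdef]
    have hones_v2 : v2 ⬝ᵥ (BN.ones:V→ℝ) = 1 := by
      simp only [dotProduct, BN.ones, hv2def, mul_one]
      exact hsum_vv2
    have hvv_ones : vv ⬝ᵥ (BN.ones:V→ℝ) = 0 := by
      rw [dotProduct_comm]; exact hvv_perp
    have hones_Av2 : (BN.ones:V→ℝ) ⬝ᵥ (G.adjMatrix ℝ *ᵥ v2) = (d:ℝ) := by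
      rw [BN.dot_symm, BN.mulVec_ones G hreg, dotProduct_smul, hones_v2]
      simp
    have hF : xq ⬝ᵥ (G.adjMatrix ℝ *ᵥ xq)
        = (Fintype.card V:ℝ)*(d:ℝ) + 2*(d:ℝ)*α^2 + 4*μ*α^2 + 4*α^3*μ*T + α^4*E4 := by
      rw [hAxq]
      nth_rewrite 1 [hxq_decomp]
      simp only [add_dotProduct, dotProduct_add, smul_dotProduct, dotProduct_smul,
        smul_eq_mul]
      rw [BN.ones_dot, hvv_perp, hvv_ones, hvv_unit, hones_v2, hE3, hones_Av2]
      rw [hTdef, hE4def]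
      ring
    have hCS : μ^2 ≤ (Fintype.card V:ℝ)*(d:ℝ)*E4 := by
      have hA2 : ∀ p : V × V, ((G.adjMatrix ℝ) p.1 p.2)^2 = (G.adjMatrix ℝ) p.1 p.2 := by
        intro p; rw [SimpleGraph.adjMatrix_apply]; split <;> norm_num
      have hprod1 : ∑ p ∈ Finset.univ ×ˢ Finset.univ,
          (G.adjMatrix ℝ) p.1 p.2 * (vv p.1 * vv p.2)
          = ∑ i, ∑ j, (G.adjMatrix ℝ) i j * (vv i * vv j) :=
        Finset.sum_product' Finset.univ Finset.univ
          (fun i j => (G.adjMatrix ℝ) i j * (vv i * vv j))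
      have hμeq : μ = ∑ p ∈ Finset.univ ×ˢ Finset.univ,
          (G.adjMatrix ℝ) p.1 p.2 * (vv p.1 * vv p.2) := by
        rw [hprod1, ← BN.qf_eq, hvv_eig, dotProduct_smul, smul_eq_mul,
          hvv_unit, mul_one]
      have hprod2 : ∑ p ∈ Finset.univ ×ˢ Finset.univ, (G.adjMatrix ℝ) p.1 p.2
          = ∑ i : V, ∑ j : V, (G.adjMatrix ℝ) i j :=
        Finset.sum_product' Finset.univ Finset.univ (fun i j => (G.adjMatrix ℝ) i j)
      have hsumA : ∑ p ∈ Finset.univ ×ˢ Finset.univ, (G.adjMatrix ℝ) p.1 p.2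
          = (Fintype.card V:ℝ)*(d:ℝ) := by
        rw [hprod2, Finset.sum_congr rfl fun i (_ : i ∈ Finset.univ) =>
          BN.row_sum G hreg i]
        simp [mul_comm]
      have hprod3 : ∑ p ∈ Finset.univ ×ˢ Finset.univ,
          (G.adjMatrix ℝ) p.1 p.2 * (vv p.1 * vv p.2)^2
          = ∑ i, ∑ j, (G.adjMatrix ℝ) i j * (vv i * vv j)^2 :=
        Finset.sum_product' Finset.univ Finset.univ
          (fun i j => (G.adjMatrix ℝ) i j * (vv i * vv j)^2)
      have hE4sum : E4 = ∑ p ∈ Finset.univ ×ˢ Finset.univ,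
          (G.adjMatrix ℝ) p.1 p.2 * (vv p.1 * vv p.2)^2 := by
        rw [← hE4def, BN.qf_eq, hprod3]
        exact Finset.sum_congr rfl fun i _ => Finset.sum_congr rfl fun j _ => by
          simp only [hv2def]; ring
      have hcs := Finset.sum_mul_sq_le_sq_mul_sq (Finset.univ ×ˢ Finset.univ)
        (fun p => (G.adjMatrix ℝ) p.1 p.2)
        (fun p => (G.adjMatrix ℝ) p.1 p.2 * (vv p.1 * vv p.2))
      have e1 : ∀ p : V × V, (G.adjMatrix ℝ) p.1 p.2 *
          ((G.adjMatrix ℝ) p.1 p.2 * (vv p.1 * vv p.2))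
          = (G.adjMatrix ℝ) p.1 p.2 * (vv p.1 * vv p.2) := by
        intro p
        rw [← mul_assoc, show (G.adjMatrix ℝ) p.1 p.2 * (G.adjMatrix ℝ) p.1 p.2
          = (G.adjMatrix ℝ) p.1 p.2 from by rw [← sq, hA2 p]]
      have e2 : ∀ p : V × V, ((G.adjMatrix ℝ) p.1 p.2 * (vv p.1 * vv p.2))^2
          = (G.adjMatrix ℝ) p.1 p.2 * (vv p.1 * vv p.2)^2 := by
        intro p
        rw [mul_pow, hA2 p]
      simp only [e1, e2, hA2] at hcs
      rw [← hμeq, hsumA, ← hE4sum] at hcs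
      exact hcs
    have hMS := BN.motzkin_straus G hω1 xq hxq_nonneg
    rw [hxq_sum, hF] at hMS
    have hkey : α^2 * (d:ℝ)^2 = (Fintype.card V:ℝ)*μ*(2*(d:ℝ)-μ) := by
      rw [hα2]
      exact div_mul_cancel₀ _ (pow_ne_zero 2 (ne_of_gt hDpos))
    have hsq2 : (Fintype.card V:ℝ)^2*μ^2 ≤ (α^2)^2*(d:ℝ)^2 := by
      have h1 : (α^2*(d:ℝ)^2)^2 = (Fintype.card V:ℝ)^2*μ^2*(2*(d:ℝ)-μ)^2 := by
        rw [hkey]; ring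
      have h2 : (d:ℝ)^2 ≤ (2*(d:ℝ)-μ)^2 := by nlinarith
      have h3 : (Fintype.card V:ℝ)^2*μ^2*(d:ℝ)^2 ≤ ((α^2)^2*(d:ℝ)^2)*(d:ℝ)^2 := by
        nlinarith [sq_nonneg ((Fintype.card V:ℝ)*μ)]
      nlinarith [mul_pos hDpos hDpos]
    have hNα : (0:ℝ) < ((Fintype.card V:ℝ)+α^2)^2 := by
      have h0 : (0:ℝ) < (Fintype.card V:ℝ)+α^2 := by nlinarith [sq_nonneg α]
      positivity
    have hndpos : (0:ℝ) < (Fintype.card V:ℝ)*(d:ℝ) := by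
      apply mul_pos _ hDpos
      linarith
    have hC : 0 ≤ 4*α^3*μ*T := by
      have h4 := mul_nonneg (by norm_num : (0:ℝ) ≤ 4) hα3T
      have heq : 4*(α^3*(μ*T)) = 4*α^3*μ*T := by ring
      rw [heq] at h4
      exact h4
    have hkey2 : α^2 * (d:ℝ)^2 = (Fintype.card V:ℝ)*μ*(2*(d:ℝ)-μ) := hkey
    have hlow0 := key_ineq (Fintype.card V:ℝ) (d:ℝ) μ (α^2) E4 (4*α^3*μ*T)
      hN2 hd1 hμ2_0 hkey2 (sq_nonneg α) hsq2 hCS hC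
    have hlow : ((Fintype.card V:ℝ)+α^2)^2 * ((d:ℝ)^2+μ^2)
        ≤ (Fintype.card V:ℝ)*(d:ℝ)*((Fintype.card V:ℝ)*(d:ℝ) + 2*(d:ℝ)*α^2 + 4*μ*α^2
          + 4*α^3*μ*T + α^4*E4) := by
      have heq2 : (Fintype.card V:ℝ)*(d:ℝ)*((Fintype.card V:ℝ)*(d:ℝ) + 2*(d:ℝ)*α^2 + 4*μ*α^2
          + 4*α^3*μ*T + (α^2)^2*E4)
          = (Fintype.card V:ℝ)*(d:ℝ)*((Fintype.card V:ℝ)*(d:ℝ) + 2*(d:ℝ)*α^2 + 4*μ*α^2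
          + 4*α^3*μ*T + α^4*E4) := by ring
      rw [← heq2]
      exact hlow0
    have hms2 : (Fintype.card V:ℝ)*(d:ℝ)*((Fintype.card V:ℝ)*(d:ℝ) + 2*(d:ℝ)*α^2 + 4*μ*α^2
          + 4*α^3*μ*T + α^4*E4)
        ≤ ((Fintype.card V:ℝ)+α^2)^2 * ((1 - 1/(G.cliqueNum:ℝ)) * ((Fintype.card V:ℝ)*(d:ℝ))) := by
      have := mul_le_mul_of_nonneg_left hMS (le_of_lt hndpos)
      calc (Fintype.card V:ℝ)*(d:ℝ)*((Fintype.card V:ℝ)*(d:ℝ) + 2*(d:ℝ)*α^2 + 4*μ*α^2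
          + 4*α^3*μ*T + α^4*E4)
          ≤ (Fintype.card V:ℝ)*(d:ℝ)*((1 - 1/(G.cliqueNum:ℝ)) * ((Fintype.card V:ℝ)+α^2)^2) :=
            this
        _ = ((Fintype.card V:ℝ)+α^2)^2 * ((1 - 1/(G.cliqueNum:ℝ)) * ((Fintype.card V:ℝ)*(d:ℝ))) := by
            ring
    have hfinal : (d:ℝ)^2 + μ^2 ≤ (1 - 1/(G.cliqueNum:ℝ)) * ((Fintype.card V:ℝ)*(d:ℝ)) := by
      have hc := le_trans hlow hms2
      exact le_of_mul_le_mul_left hc hNα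
    rw [hμ1d]
    have hrhs : 2 * ((G.cliqueNum : ℝ) - 1) / (G.cliqueNum : ℝ) * (G.edgeFinset.card : ℝ)
        = (1 - 1/(G.cliqueNum:ℝ)) * ((Fintype.card V:ℝ)*(d:ℝ)) := by
      rw [hnd]
      field_simp
    rw [hrhs]
    exact hfinal
end

section
/- Let G be a d-regular graph on n vertices with clique number ω. If 0 ≤ μ₂(G) ≤ ((ω−1)/ω)n − d, then μ₁(G)² + μ₂(G)² ≤ (2(ω−1)/ω)·m where m = nd/2 is the number of edges. -/
open Matrix Finset SimpleGraph

variable {V : Type*} [Fintype V] [DecidableEq V]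

set_option linter.unusedSectionVars false

lemma abs_eigenvalues_le (G : SimpleGraph V) [DecidableRel G.Adj]
    {d : ℕ} (hreg : G.IsRegularOfDegree d) (i : V) :
    |(adjH G).eigenvalues i| ≤ (d : ℝ) := by
  set μ := (adjH G).eigenvalues i with hμ
  have hev : Module.End.HasEigenvalue (Matrix.toLin' (G.adjMatrix ℝ)) μ := by
    have hv := (adjH G).mulVec_eigenvectorBasis i
    refine Module.End.hasEigenvalue_of_hasEigenvector (x := ⇑((adjH G).eigenvectorBasis i)) ⟨?_, ?_⟩
    · rw [Module.End.mem_eigenspace_iff]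
      ext j
      simpa [Matrix.toLin'_apply] using congrFun hv j
    · intro h0
      apply (adjH G).eigenvectorBasis.toBasis.ne_zero i
      simpa using congrArg (WithLp.toLp 2) h0
  obtain ⟨k, hk⟩ := eigenvalue_mem_ball hev
  rw [Metric.mem_closedBall, Real.dist_eq] at hk
  have hdiag : G.adjMatrix ℝ k k = 0 := by simp
  have hsum : (∑ j ∈ Finset.univ.erase k, ‖G.adjMatrix ℝ k j‖) = (d : ℝ) := by
    have : ∀ j ∈ Finset.univ.erase k, ‖G.adjMatrix ℝ k j‖ = G.adjMatrix ℝ k j := by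
      intro j _
      rcases (G.isAdjMatrix_adjMatrix ℝ).zero_or_one (i := k) (j := j) with h | h <;>
        rw [h] <;> simp
    rw [Finset.sum_congr rfl this, Finset.sum_erase _ hdiag]
    have := G.adjMatrix_mulVec_const_apply (α := ℝ) (a := (1 : ℝ)) (v := k)
    simp only [mulVec, dotProduct, Function.const_apply, mul_one] at this
    rw [this, hreg k]
  rw [hdiag, sub_zero] at hk
  calc |μ| ≤ ∑ j ∈ Finset.univ.erase k, ‖G.adjMatrix ℝ k j‖ := hk
    _ = (d : ℝ) := hsum

lemma abs_graphEig_le (G : SimpleGraph V) [DecidableRel G.Adj]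
    {d : ℕ} (hreg : G.IsRegularOfDegree d) (k : ℕ) :
    |graphEig G k| ≤ (d : ℝ) := by
  unfold graphEig
  set l := ((Finset.univ.val.map (adjH G).eigenvalues).sort (· ≥ ·)) with hl
  by_cases h : k < l.length
  · have hmem : l.getD k 0 ∈ l := by
      rw [List.getD_eq_getElem l 0 h]
      exact List.getElem_mem h
    have : l.getD k 0 ∈ Finset.univ.val.map (adjH G).eigenvalues := by
      rw [hl] at hmem
      exact (Multiset.mem_sort _).mp hmem
    obtain ⟨i, _, hi⟩ := Multiset.mem_map.mp this
    rw [← hi]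
    exact abs_eigenvalues_le G hreg i
  · rw [List.getD_eq_default l 0 (le_of_not_gt h)]
    simp

theorem regular_small_second_eigenvalue (G : SimpleGraph V) [DecidableRel G.Adj]
    (d : ℕ) (hreg : G.IsRegularOfDegree d)
    (h0 : 0 ≤ graphEig G 1)
    (h1 : graphEig G 1 ≤
      ((G.cliqueNum : ℝ) - 1) / (G.cliqueNum : ℝ) * (Fintype.card V : ℝ) - d) :
    (graphEig G 0) ^ 2 + (graphEig G 1) ^ 2 ≤
      2 * ((G.cliqueNum : ℝ) - 1) / (G.cliqueNum : ℝ) * G.edgeFinset.card := by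
  have ha := abs_le.mp (abs_graphEig_le G hreg 0)
  have hb := abs_le.mp (abs_graphEig_le G hreg 1)
  have hm : (Fintype.card V : ℝ) * d = 2 * G.edgeFinset.card := by
    have := G.sum_degrees_eq_twice_card_edges
    rw [Finset.sum_congr rfl (fun v _ => hreg v), Finset.sum_const, smul_eq_mul,
      Finset.card_univ] at this
    exact_mod_cast this
  set e := ((G.cliqueNum : ℝ) - 1) / (G.cliqueNum : ℝ) with he
  set a := graphEig G 0
  set b := graphEig G 1
  set n := (Fintype.card V : ℝ)
  have key : a ^ 2 + b ^ 2 ≤ e * (n * d) := by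
    nlinarith [ha.1, ha.2, hb.1, hb.2, h0, h1, sq_nonneg (a - d), sq_nonneg (b - d)]
  calc a ^ 2 + b ^ 2 ≤ e * (n * d) := key
    _ = 2 * e * G.edgeFinset.card := by rw [hm]; ring
    _ = 2 * ((G.cliqueNum : ℝ) - 1) / (G.cliqueNum : ℝ) * G.edgeFinset.card := by
        rw [he]; ring
end

section
/- If G is a d-regular graph on n vertices that is K_{ω+1}-free and has exactly ((ω−1)/(2ω))·n² edges (equivalently d = ((ω−1)/ω)n), then G is the complete multipartite Turán graph T(n, ω) with all parts of equal size n/ω; in particular ω divides n. -/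
open Matrix Finset SimpleGraph

variable {V : Type*} [Fintype V] [DecidableEq V]

set_option linter.unusedSectionVars false

lemma turan_nat_key (n ω : ℕ) (hω : 1 ≤ ω) :
    2 * #(turanGraph n ω).edgeFinset
      + ∑ k ∈ Finset.range ω, (#(Finset.univ.filter (fun v : Fin n => v.val % ω = k))) ^ 2
      = n ^ 2 := by
  classical
  set s : ℕ → ℕ := fun k => #(Finset.univ.filter (fun v : Fin n => v.val % ω = k)) with hs
  have hmaps : ∀ v : Fin n, v ∈ (Finset.univ : Finset (Fin n)) →
      v.val % ω ∈ Finset.range ω := fun v _ => Finset.mem_range.2 (Nat.mod_lt _ hω)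
  have hsle : ∀ k, s k ≤ n := by
    intro k
    calc s k ≤ #(Finset.univ : Finset (Fin n)) := Finset.card_filter_le _ _
    _ = n := by simp
  have hdeg : ∀ v : Fin n, (turanGraph n ω).degree v + s (v.val % ω) = n := by
    intro v
    rw [← SimpleGraph.card_neighborFinset_eq_degree]
    have hnb : (turanGraph n ω).neighborFinset v
        = Finset.univ.filter (fun w : Fin n => ¬ (w.val % ω = v.val % ω)) := by
      ext w
      rw [SimpleGraph.mem_neighborFinset]
      simp only [SimpleGraph.mem_neighborFinset, Finset.mem_filter, Finset.mem_univ, true_and,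
        turanGraph]
      exact ⟨fun h => fun he => h he.symm, fun h => fun he => h he.symm⟩
    rw [hnb, Finset.filter_not, Finset.card_sdiff_of_subset (Finset.filter_subset _ _)]
    have := hsle (v.val % ω)
    simp only [hs] at this ⊢
    have hc : #(Finset.univ : Finset (Fin n)) = n := by simp
    omega
  have hfib : ∑ v : Fin n, s (v.val % ω) = ∑ k ∈ Finset.range ω, (s k) ^ 2 := by
    rw [← Finset.sum_fiberwise_of_maps_to hmaps (fun v : Fin n => s (v.val % ω))]
    refine Finset.sum_congr rfl fun k hk => ?_
    have hcongr : ∀ v ∈ Finset.univ.filter (fun v : Fin n => v.val % ω = k),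
        s (v.val % ω) = s k := by
      intro v hv; simp only [Finset.mem_filter] at hv; rw [hv.2]
    rw [Finset.sum_congr rfl hcongr, Finset.sum_const, smul_eq_mul, sq]
  have hsum : ∑ v : Fin n, ((turanGraph n ω).degree v + s (v.val % ω)) = n ^ 2 := by
    rw [Finset.sum_congr rfl (fun v _ => hdeg v), Finset.sum_const, Finset.card_univ,
      Fintype.card_fin, smul_eq_mul, sq]
  rw [Finset.sum_add_distrib, SimpleGraph.sum_degrees_eq_twice_card_edges, hfib] at hsum
  exact hsum

lemma turan_edge_bound (n ω : ℕ) (hω : 1 ≤ ω) :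
    ((#(turanGraph n ω).edgeFinset : ℝ)) ≤ ((ω : ℝ) - 1) / (2 * ω) * (n : ℝ) ^ 2 := by
  classical
  have key := turan_nat_key n ω hω
  set s : ℕ → ℕ := fun k => #(Finset.univ.filter (fun v : Fin n => v.val % ω = k)) with hs
  have hsum : ∑ k ∈ Finset.range ω, s k = n := by
    rw [← Finset.card_eq_sum_card_fiberwise
      (fun v (_ : v ∈ (Finset.univ : Finset (Fin n))) => Finset.mem_range.2 (Nat.mod_lt _ hω)),
      Finset.card_univ, Fintype.card_fin]
  have hCS : ((n : ℝ)) ^ 2 ≤ (ω : ℝ) * ∑ k ∈ Finset.range ω, ((s k : ℝ)) ^ 2 := by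
    have := sq_sum_le_card_mul_sum_sq (s := Finset.range ω)
      (f := fun k => ((s k : ℝ)))
    rw [Finset.card_range] at this
    calc ((n : ℝ)) ^ 2 = (∑ k ∈ Finset.range ω, ((s k : ℝ))) ^ 2 := by
          rw [← Nat.cast_sum, hsum]
    _ ≤ (ω : ℝ) * ∑ k ∈ Finset.range ω, ((s k : ℝ)) ^ 2 := this
  have keyR : 2 * (#(turanGraph n ω).edgeFinset : ℝ)
      + ∑ k ∈ Finset.range ω, ((s k : ℝ)) ^ 2 = (n : ℝ) ^ 2 := by
    exact_mod_cast congrArg (Nat.cast : ℕ → ℝ) key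
  have hωR : (1 : ℝ) ≤ (ω : ℝ) := by exact_mod_cast hω
  rw [div_mul_eq_mul_div, le_div_iff₀ (by positivity)]
  nlinarith [hCS, keyR]

theorem regular_extremal_is_turan (n ω : ℕ) (hω : 1 ≤ ω)
    (G : SimpleGraph V) [DecidableRel G.Adj] (hcard : Fintype.card V = n)
    (d : ℕ) (hreg : G.IsRegularOfDegree d)
    (hfree : G.CliqueFree (ω + 1))
    (hm : (G.edgeFinset.card : ℝ) = ((ω : ℝ) - 1) / (2 * ω) * (n : ℝ) ^ 2) :
    Nonempty (G ≃g turanGraph n ω) ∧ ω ∣ n := by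
  subst hcard
  classical
  obtain ⟨T, _, hT⟩ := SimpleGraph.exists_isTuranMaximal (V := V) (r := ω) hω
  obtain ⟨f⟩ := hT.nonempty_iso_turanGraph
  have hTcard : #T.edgeFinset = #(turanGraph (Fintype.card V) ω).edgeFinset :=
    f.card_edgeFinset_eq
  have hGle : #G.edgeFinset ≤ #T.edgeFinset := hT.2 hfree
  have hTle : (#T.edgeFinset : ℝ)
      ≤ ((ω : ℝ) - 1) / (2 * ω) * ((Fintype.card V : ℕ) : ℝ) ^ 2 := by
    rw [hTcard]; exact turan_edge_bound _ _ hω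
  have heq : #T.edgeFinset = #G.edgeFinset := by
    have : (#T.edgeFinset : ℝ) ≤ (#G.edgeFinset : ℝ) := by rw [hm]; exact hTle
    exact le_antisymm (by exact_mod_cast this) hGle
  have hGmax : G.IsTuranMaximal ω :=
    ⟨hfree, fun ⦃H⦄ _ cf => (hT.2 cf).trans heq.le⟩
  refine ⟨hGmax.nonempty_iso_turanGraph, ?_⟩
  -- divisibility
  set m := Fintype.card V with hmV
  have hhand : ∑ v : V, G.degree v = 2 * #G.edgeFinset :=
    SimpleGraph.sum_degrees_eq_twice_card_edges G
  have hnd : m * d = 2 * #G.edgeFinset := by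
    rw [← hhand, Finset.sum_congr rfl (fun v _ => hreg v), Finset.sum_const, Finset.card_univ,
      smul_eq_mul]
  have hR : (ω : ℝ) * (m * d : ℕ) = ((ω : ℝ) - 1) * (m : ℝ) ^ 2 := by
    rw [hnd]
    push_cast
    rw [hm]
    have hωpos : (0 : ℝ) < (ω : ℝ) := by exact_mod_cast hω
    field_simp
  have hωR : (1 : ℝ) ≤ (ω : ℝ) := by exact_mod_cast hω
  have hNat : ω * (m * d) = (ω - 1) * m ^ 2 := by
    have h1 : ((ω * (m * d) : ℕ) : ℝ) = (((ω - 1) * m ^ 2 : ℕ) : ℝ) := by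
      push_cast [Nat.cast_sub hω]
      rw [← hR]; push_cast; ring
    exact_mod_cast h1
  rcases Nat.eq_zero_or_pos m with hm0 | hmpos
  · rw [hm0]; exact Dvd.intro 0 rfl
  · have hcancel : ω * d = (ω - 1) * m := by
      have : m * (ω * d) = m * ((ω - 1) * m) := by
        calc m * (ω * d) = ω * (m * d) := by ring
        _ = (ω - 1) * m ^ 2 := hNat
        _ = m * ((ω - 1) * m) := by ring
      exact Nat.eq_of_mul_eq_mul_left hmpos this
    have hdvd : ω ∣ (ω - 1) * m := ⟨d, hcancel.symm⟩
    have hcop : Nat.Coprime ω (ω - 1) := by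
      unfold Nat.Coprime
      rw [Nat.gcd_self_sub_right hω, Nat.gcd_one_right]
    exact hcop.dvd_of_dvd_mul_left hdvd
end

section
/- Let G be a graph with unit eigenvectors v₁, v₂ for the two largest eigenvalues μ₁ ≥ μ₂ ≥ 0 of A_G, and let K be any symmetric matrix satisfying xᵀ K x ≥ 0 for all entrywise-nonnegative x. Then μ₁² (v₁∘v₁)ᵀK(v₁∘v₁) + μ₂² (v₂∘v₂)ᵀK(v₂∘v₂) + 2μ₁μ₂ (v₁∘v₁)ᵀK(v₂∘v₂) + 4μ₁μ₂ (v₁∘v₂)ᵀK(v₁∘v₂) ≥ 0, provided v₁ can be chosen with nonnegative entries in the expansion (i.e., this holds by applying the hypothesis to x± = (√μ₁ v₁ ± √μ₂ v₂)∘(√μ₁ v₁ ± √μ₂ v₂)). -/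
open Matrix Finset SimpleGraph

variable {V : Type*} [Fintype V] [DecidableEq V]

set_option linter.unusedSectionVars false

def Matrix.IsCopositive {ι : Type*} [Fintype ι] (K : Matrix ι ι ℝ) : Prop :=
  ∀ x : ι → ℝ, (∀ i, 0 ≤ x i) → 0 ≤ x ⬝ᵥ (K *ᵥ x)

section QuadraticForm

variable {ι R : Type*} [Fintype ι] [CommRing R]

theorem Matrix.IsSymm.dotProduct_mulVec_comm {K : Matrix ι ι R} (hK : K.IsSymm) (x y : ι → R) :
    x ⬝ᵥ (K *ᵥ y) = y ⬝ᵥ (K *ᵥ x) := by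
  rw [dotProduct_mulVec, dotProduct_comm, ← mulVec_transpose, hK.eq]

theorem Matrix.dotProduct_mulVec_add_add_sub (K : Matrix ι ι R) (x y : ι → R) :
    (x + y) ⬝ᵥ (K *ᵥ (x + y)) + (x - y) ⬝ᵥ (K *ᵥ (x - y))
      = 2 * (x ⬝ᵥ (K *ᵥ x)) + 2 * (y ⬝ᵥ (K *ᵥ y)) := by
  simp only [mulVec_add, mulVec_sub, add_dotProduct, sub_dotProduct, dotProduct_add,
    dotProduct_sub]
  ring

theorem Matrix.IsSymm.dotProduct_mulVec_smul_add_smul {K : Matrix ι ι R} (hK : K.IsSymm)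
    (a b : R) (x y : ι → R) :
    (a • x + b • y) ⬝ᵥ (K *ᵥ (a • x + b • y))
      = a ^ 2 * (x ⬝ᵥ (K *ᵥ x)) + b ^ 2 * (y ⬝ᵥ (K *ᵥ y)) + 2 * a * b * (x ⬝ᵥ (K *ᵥ y)) := by
  simp only [mulVec_add, mulVec_smul, add_dotProduct, smul_dotProduct, dotProduct_add,
    dotProduct_smul, smul_eq_mul, hK.dotProduct_mulVec_comm y x]
  ring

theorem smul_add_smul_mul_self (a b : R) (v w : ι → R) :
    (a • v + b • w) * (a • v + b • w)
      = (a ^ 2 • (v * v) + b ^ 2 • (w * w)) + (2 * a * b) • (v * w) := by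
  ext i
  simp only [Pi.mul_apply, Pi.add_apply, Pi.smul_apply, smul_eq_mul]
  ring

theorem smul_sub_smul_mul_self (a b : R) (v w : ι → R) :
    (a • v - b • w) * (a • v - b • w)
      = (a ^ 2 • (v * v) + b ^ 2 • (w * w)) - (2 * a * b) • (v * w) := by
  ext i
  simp only [Pi.mul_apply, Pi.add_apply, Pi.sub_apply, Pi.smul_apply, smul_eq_mul]
  ring

end QuadraticForm

/-- Half the sum of the copositivity inequalities for `(a v ± b w) ∘ (a v ± b w)`; the theorem is
the case `a = √μ₁`, `b = √μ₂`. -/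
theorem Matrix.IsCopositive.sq_combination_nonneg {ι : Type*} [Fintype ι] {K : Matrix ι ι ℝ}
    (hKs : K.IsSymm) (hK : K.IsCopositive) (a b : ℝ) (v w : ι → ℝ) :
    0 ≤ (a ^ 2) ^ 2 * ((v * v) ⬝ᵥ (K *ᵥ (v * v)))
        + (b ^ 2) ^ 2 * ((w * w) ⬝ᵥ (K *ᵥ (w * w)))
        + 2 * a ^ 2 * b ^ 2 * ((v * v) ⬝ᵥ (K *ᵥ (w * w)))
        + 4 * a ^ 2 * b ^ 2 * ((v * w) ⬝ᵥ (K *ᵥ (v * w))) := by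
  have hplus := hK ((a • v + b • w) * (a • v + b • w)) fun i => mul_self_nonneg _
  have hminus := hK ((a • v - b • w) * (a • v - b • w)) fun i => mul_self_nonneg _
  rw [smul_add_smul_mul_self] at hplus
  rw [smul_sub_smul_mul_self] at hminus
  have hsum := K.dotProduct_mulVec_add_add_sub (a ^ 2 • (v * v) + b ^ 2 • (w * w))
    ((2 * a * b) • (v * w))
  have hcross : ((2 * a * b) • (v * w)) ⬝ᵥ (K *ᵥ ((2 * a * b) • (v * w)))
      = 4 * a ^ 2 * b ^ 2 * ((v * w) ⬝ᵥ (K *ᵥ (v * w))) := by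
    rw [mulVec_smul, smul_dotProduct, dotProduct_smul, smul_eq_mul, smul_eq_mul]
    ring
  rw [hKs.dotProduct_mulVec_smul_add_smul, hcross] at hsum
  linarith

theorem Matrix.eigenvalue_nonneg_of_nonneg {ι : Type*} [Fintype ι] {A : Matrix ι ι ℝ}
    (hA : ∀ i j, 0 ≤ A i j) {μ : ℝ} {v : ι → ℝ} (hAv : A *ᵥ v = μ • v) (hv : ∀ i, 0 ≤ v i)
    (hvv : 0 < v ⬝ᵥ v) : 0 ≤ μ := by
  have hquad : 0 ≤ v ⬝ᵥ (A *ᵥ v) :=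
    dotProduct_nonneg_of_nonneg hv fun i => sum_nonneg fun j _ => mul_nonneg (hA i j) (hv j)
  rw [hAv, dotProduct_smul, smul_eq_mul] at hquad
  exact nonneg_of_mul_nonneg_left hquad hvv

theorem SimpleGraph.adjMatrix_nonneg {V : Type*} (G : SimpleGraph V) [DecidableRel G.Adj]
    (i j : V) : 0 ≤ G.adjMatrix ℝ i j := by
  rw [adjMatrix_apply]
  split_ifs <;> norm_num

theorem quadratic_form_combination_nonneg_general (G : SimpleGraph V) [DecidableRel G.Adj]
    (v₁ v₂ : V → ℝ)
    (h1 : G.adjMatrix ℝ *ᵥ v₁ = graphEig G 0 • v₁)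
    (hn1 : v₁ ⬝ᵥ v₁ = 1)
    (hμ : 0 ≤ graphEig G 1)
    (K : Matrix V V ℝ) (hKs : K.IsSymm)
    (hKpos : ∀ x : V → ℝ, (∀ i, 0 ≤ x i) → 0 ≤ x ⬝ᵥ (K *ᵥ x))
    (hv₁ : ∀ i, 0 ≤ v₁ i) :
    0 ≤ (graphEig G 0) ^ 2 * ((v₁ * v₁) ⬝ᵥ (K *ᵥ (v₁ * v₁)))
        + (graphEig G 1) ^ 2 * ((v₂ * v₂) ⬝ᵥ (K *ᵥ (v₂ * v₂)))
        + 2 * graphEig G 0 * graphEig G 1 * ((v₁ * v₁) ⬝ᵥ (K *ᵥ (v₂ * v₂)))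
        + 4 * graphEig G 0 * graphEig G 1 * ((v₁ * v₂) ⬝ᵥ (K *ᵥ (v₁ * v₂))) := by
  have hμ₁ : 0 ≤ graphEig G 0 :=
    eigenvalue_nonneg_of_nonneg G.adjMatrix_nonneg h1 hv₁ (hn1 ▸ one_pos)
  have key := Matrix.IsCopositive.sq_combination_nonneg hKs hKpos
    √(graphEig G 0) √(graphEig G 1) v₁ v₂
  rwa [Real.sq_sqrt hμ₁, Real.sq_sqrt hμ] at key

theorem quadratic_form_combination_nonneg (G : SimpleGraph V) [DecidableRel G.Adj]
    (v₁ v₂ : V → ℝ)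
    (h1 : G.adjMatrix ℝ *ᵥ v₁ = graphEig G 0 • v₁)
    (h2 : G.adjMatrix ℝ *ᵥ v₂ = graphEig G 1 • v₂)
    (hn1 : v₁ ⬝ᵥ v₁ = 1) (hn2 : v₂ ⬝ᵥ v₂ = 1) (ho : v₁ ⬝ᵥ v₂ = 0)
    (hμ : 0 ≤ graphEig G 1)
    (K : Matrix V V ℝ) (hKs : K.IsSymm)
    (hKpos : ∀ x : V → ℝ, (∀ i, 0 ≤ x i) → 0 ≤ x ⬝ᵥ (K *ᵥ x))
    (hv₁ : ∀ i, 0 ≤ v₁ i) :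
    0 ≤ (graphEig G 0) ^ 2 * ((v₁ * v₁) ⬝ᵥ (K *ᵥ (v₁ * v₁)))
        + (graphEig G 1) ^ 2 * ((v₂ * v₂) ⬝ᵥ (K *ᵥ (v₂ * v₂)))
        + 2 * graphEig G 0 * graphEig G 1 * ((v₁ * v₁) ⬝ᵥ (K *ᵥ (v₂ * v₂)))
        + 4 * graphEig G 0 * graphEig G 1 * ((v₁ * v₂) ⬝ᵥ (K *ᵥ (v₁ * v₂))) :=
  quadratic_form_combination_nonneg_general G v₁ v₂ h1 hn1 hμ K hKs hKpos hv₁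
end
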